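/- arXiv:2312.16336 — 5 statements merged into one kernel-verified Lean document; each statement's English description precedes it below -/
import Mathlib

section
/- Let u be a nonempty finite word over an alphabet Σ whose last letter is a. For every LTL formula φ and every k ∈ ℕ, if u satisfies φ then the word u·a^k (u followed by k copies of a) satisfies φ. -/
/-- Syntax of LTL (in negation normal form: negation only on atomic formulas). -/
inductive LTL (σ : Type) : Type
  | top   : LTL σ
  | bot   : LTL σ
  | atom  : σ → LTL σ
  | natom : σ → LTL σ
  | conj  : LTL σ → LTL σ → LTL σ
  | disj  : LTL σ → LTL σ → LTL σ
  | next  : LTL σ → LTL σ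
  | ev    : LTL σ → LTL σ
  | glob  : LTL σ → LTL σ
  | untl  : LTL σ → LTL σ → LTL σ

namespace LTL

variable {σ : Type}

/-- Satisfaction of an LTL formula by a finite word (intended for nonempty words).
`w.drop i` is the suffix of `w` starting at (1-indexed) position `i+1`. -/
def sat : LTL σ → List σ → Prop
  | top, _ => True
  | bot, _ => False
  | atom c, w => w.head? = some c
  | natom c, w => w ≠ [] ∧ w.head? ≠ some c
  | conj φ ψ, w => sat φ w ∧ sat ψ w
  | disj φ ψ, w => sat φ w ∨ sat ψ w
  | next φ, w => 2 ≤ w.length ∧ sat φ w.tail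
  | ev φ, w => ∃ i < w.length, sat φ (w.drop i)
  | glob φ, w => ∀ i < w.length, sat φ (w.drop i)
  | untl φ ψ, w => ∃ i < w.length, sat ψ (w.drop i) ∧ ∀ j < i, sat φ (w.drop j)

/-- Size of a formula: the number of nodes of its syntax tree. -/
def size : LTL σ → ℕ
  | top => 1
  | bot => 1
  | atom _ => 1
  | natom _ => 2
  | conj φ ψ => size φ + size ψ + 1
  | disj φ ψ => size φ + size ψ + 1
  | next φ => size φ + 1
  | ev φ => size φ + 1
  | glob φ => size φ + 1
  | untl φ ψ => size φ + size ψ + 1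

/-- The operators of LTL. -/
inductive Op : Type
  | X | F | G | U | And | Or | Not
  deriving DecidableEq

/-- `φ.usesOnly O`: the formula `φ` is built from atomic formulas (and ⊤, ⊥)
using only operators belonging to the set `O`. -/
def usesOnly : LTL σ → Set Op → Prop
  | top, _ => True
  | bot, _ => True
  | atom _, _ => True
  | natom _, O => Op.Not ∈ O
  | conj φ ψ, O => Op.And ∈ O ∧ usesOnly φ O ∧ usesOnly ψ O
  | disj φ ψ, O => Op.Or ∈ O ∧ usesOnly φ O ∧ usesOnly ψ O
  | next φ, O => Op.X ∈ O ∧ usesOnly φ O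
  | ev φ, O => Op.F ∈ O ∧ usesOnly φ O
  | glob φ, O => Op.G ∈ O ∧ usesOnly φ O
  | untl φ ψ, O => Op.U ∈ O ∧ usesOnly φ O ∧ usesOnly ψ O

/-- `φ.constFree`: the constants ⊤ and ⊥ do not occur in `φ`
(for fragments built from atomic formulas only). -/
def constFree : LTL σ → Prop
  | top => False
  | bot => False
  | atom _ => True
  | natom _ => True
  | conj φ ψ => constFree φ ∧ constFree ψ
  | disj φ ψ => constFree φ ∧ constFree ψ
  | next φ => constFree φ
  | ev φ => constFree φ
  | glob φ => constFree φ
  | untl φ ψ => constFree φ ∧ constFree ψ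

/-- Two formulas are equivalent if exactly the same nonempty finite words satisfy them. -/
def Equiv (φ ψ : LTL σ) : Prop := ∀ w : List σ, w ≠ [] → (sat φ w ↔ sat ψ w)

/-- `φ.Separates P N`: every word of `P` satisfies `φ` and no word of `N` does. -/
def Separates (φ : LTL σ) (P N : Finset (List σ)) : Prop :=
  (∀ u ∈ P, sat φ u) ∧ (∀ v ∈ N, ¬ sat φ v)

end LTL

private lemma ltl_ne_nil_drop {σ : Type} (u : List σ) (i : ℕ) (hi : i < u.length) :
    u.drop i ≠ [] := by
  intro h
  have := congrArg List.length h
  simp at this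
  omega

private lemma ltl_getLast?_drop {σ : Type} (u : List σ) (a : σ) (i : ℕ) (hi : i < u.length)
    (ha : u.getLast? = some a) : (u.drop i).getLast? = some a := by
  rw [← List.take_append_drop i u] at ha
  rwa [List.getLast?_append_of_ne_nil _ (ltl_ne_nil_drop u i hi)] at ha

private lemma ltl_drop_pred {σ : Type} (u : List σ) (a : σ) (ha : u.getLast? = some a) :
    u.drop (u.length - 1) = [a] := by
  obtain ⟨v, rfl⟩ := List.getLast?_eq_some_iff.mp ha
  have : (v ++ [a]).length - 1 = v.length := by simp
  rw [this]
  exact List.drop_left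

private lemma ltl_main {σ : Type} (a : σ) (φ : LTL σ) :
    ∀ (u : List σ) (k : ℕ), u ≠ [] → u.getLast? = some a → φ.sat u →
      φ.sat (u ++ List.replicate k a) := by
  induction φ with
  | top => intro u k _ _ _; trivial
  | bot => intro u k _ _ h; exact h.elim
  | atom c =>
    intro u k hu _ h
    show (u ++ List.replicate k a).head? = some c
    rwa [List.head?_append_of_ne_nil u hu]
  | natom c =>
    intro u k hu _ h
    refine ⟨by simp [hu], ?_⟩
    rw [List.head?_append_of_ne_nil u hu]
    exact h.2
  | conj φ ψ ihφ ihψ =>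
    intro u k hu ha h
    exact ⟨ihφ u k hu ha h.1, ihψ u k hu ha h.2⟩
  | disj φ ψ ihφ ihψ =>
    intro u k hu ha h
    exact h.elim (fun h => Or.inl (ihφ u k hu ha h)) (fun h => Or.inr (ihψ u k hu ha h))
  | next φ ih =>
    intro u k hu ha h
    obtain ⟨h2, hφ⟩ := h
    have htne : u.tail ≠ [] := by
      intro hn
      have := congrArg List.length hn
      simp at this
      omega
    refine ⟨by simp; omega, ?_⟩
    have : (u ++ List.replicate k a).tail = u.tail ++ List.replicate k a := by
      cases u with
      | nil => exact absurd rfl hu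
      | cons x xs => simp
    rw [this]
    refine ih u.tail k htne ?_ hφ
    have : u.tail = u.drop 1 := by simp
    rw [this]
    exact ltl_getLast?_drop u a 1 (by omega) ha
  | ev φ ih =>
    intro u k hu ha h
    obtain ⟨i, hi, hs⟩ := h
    refine ⟨i, by simp; omega, ?_⟩
    rw [List.drop_append_of_le_length (by omega)]
    exact ih (u.drop i) k (ltl_ne_nil_drop u i hi) (ltl_getLast?_drop u a i hi ha) hs
  | glob φ ih =>
    intro u k hu ha h
    intro i hi
    simp only [List.length_append, List.length_replicate] at hi
    by_cases hlt : i < u.length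
    · rw [List.drop_append_of_le_length (by omega)]
      exact ih (u.drop i) k (ltl_ne_nil_drop u i hlt) (ltl_getLast?_drop u a i hlt ha)
        (h i hlt)
    · have hle : u.length ≤ i := Nat.le_of_not_lt hlt
      have hdrop : (u ++ List.replicate k a).drop i = List.replicate (k - (i - u.length)) a := by
        rw [List.drop_append]
        simp [List.drop_eq_nil_of_le hle]
      have hpos : 0 < k - (i - u.length) :=
        Nat.sub_pos_of_lt (Nat.sub_lt_left_of_lt_add hle hi)
      have hmk : k - (i - u.length) - 1 + 1 = k - (i - u.length) := Nat.sub_add_cancel hpos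
      have hrep : List.replicate (k - (i - u.length)) a
          = [a] ++ List.replicate (k - (i - u.length) - 1) a := by
        conv_lhs => rw [← hmk]
        rw [List.replicate_succ]
        rfl
      rw [hdrop, hrep]
      have hsa : φ.sat [a] := by
        have := h (u.length - 1) (Nat.sub_lt (List.length_pos_iff.mpr hu) Nat.one_pos)
        rwa [ltl_drop_pred u a ha] at this
      exact ih [a] (k - (i - u.length) - 1) (by simp) (by simp) hsa
  | untl φ ψ ihφ ihψ =>
    intro u k hu ha h
    obtain ⟨i, hi, hsψ, hall⟩ := h
    refine ⟨i, by simp; omega, ?_, ?_⟩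
    · rw [List.drop_append_of_le_length (by omega)]
      exact ihψ (u.drop i) k (ltl_ne_nil_drop u i hi) (ltl_getLast?_drop u a i hi ha) hsψ
    · intro j hj
      have hjlt : j < u.length := by omega
      rw [List.drop_append_of_le_length (by omega)]
      exact ihφ (u.drop j) k (ltl_ne_nil_drop u j hjlt) (ltl_getLast?_drop u a j hjlt ha)
        (hall j hj)

/-- LTL cannot detect repetitions of the last letter. -/
theorem sat_append_replicate_getLast {σ : Type} (u : List σ) (a : σ) (hu : u ≠ [])
    (ha : u.getLast? = some a) (φ : LTL σ) (k : ℕ) (h : φ.sat u) :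
    φ.sat (u ++ List.replicate k a) := by
  exact ltl_main a φ u k hu ha h
end

section
/- Let ψ₁,…,ψ_r be LTL formulas and let φ = F(ψ₁ ∧ F(ψ₂ ∧ (⋯ ∧ Fψ_r)⋯)). If a nonempty finite word v does not satisfy φ, then there exist indices i₁ < i₂ < ⋯ < i_k with k ≤ |v| + 1 such that v does not satisfy ψ = F(ψ_{i₁} ∧ F(ψ_{i₂} ∧ (⋯ ∧ Fψ_{i_k})⋯)), and moreover every nonempty finite word satisfying φ also satisfies ψ. -/
/-- The nested formula `F(ψ₁ ∧ F(ψ₂ ∧ (⋯ ∧ Fψ_r)⋯))` built from a list of formulas. -/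
def nestF {σ : Type} : List (LTL σ) → LTL σ
  | [] => LTL.top
  | [ψ] => LTL.ev ψ
  | ψ :: rest => LTL.ev (LTL.conj ψ (nestF rest))

/-- Auxiliary semantics for `nestF`: a chain of nondecreasing positions. -/
def holdsF {σ : Type} : List (LTL σ) → List σ → Prop
  | [], _ => True
  | ψ :: rest, w => ∃ i < w.length, ψ.sat (w.drop i) ∧ holdsF rest (w.drop i)

lemma nestF_iff {σ : Type} : ∀ (l : List (LTL σ)) (w : List σ),
    (nestF l).sat w ↔ holdsF l w
  | [], w => Iff.rfl
  | [ψ], w => by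
      simp [nestF, holdsF, LTL.sat]
  | ψ :: χ :: rest, w => by
      simp only [nestF, holdsF, LTL.sat]
      constructor
      · rintro ⟨i, hi, h1, h2⟩
        exact ⟨i, hi, h1, (nestF_iff (χ :: rest) (w.drop i)).1 h2⟩
      · rintro ⟨i, hi, h1, h2⟩
        exact ⟨i, hi, h1, (nestF_iff (χ :: rest) (w.drop i)).2 h2⟩

lemma holdsF_mono_drop {σ : Type} (l : List (LTL σ)) (w : List σ) {i j : ℕ}
    (hij : i ≤ j) (h : holdsF l (w.drop j)) : holdsF l (w.drop i) := by
  cases l with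
  | nil => trivial
  | cons ψ rest =>
    obtain ⟨k, hk, h1, h2⟩ := h
    rw [List.length_drop] at hk
    refine ⟨j + k - i, ?_, ?_, ?_⟩
    · rw [List.length_drop]; omega
    · rw [List.drop_drop] at h1 ⊢
      have heq : i + (j + k - i) = j + k := by omega
      rw [heq]; exact h1
    · rw [List.drop_drop] at h2 ⊢
      have heq : i + (j + k - i) = j + k := by omega
      rw [heq]; exact h2

lemma holdsF_sublist {σ : Type} {sub l : List (LTL σ)} (hs : sub.Sublist l) :
    ∀ w : List σ, holdsF l w → holdsF sub w := by
  induction hs with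
  | slnil => intro w h; trivial
  | cons a hs ih =>
    intro w h
    obtain ⟨i, hi, _, h2⟩ := h
    have h3 := ih _ h2
    have h4 := holdsF_mono_drop _ w (Nat.zero_le i) h3
    rwa [List.drop_zero] at h4
  | cons_cons a hs ih =>
    intro w h
    obtain ⟨i, hi, h1, h2⟩ := h
    exact ⟨i, hi, h1, ih _ h2⟩

lemma exists_short_aux {σ : Type} : ∀ (n : ℕ) (l : List (LTL σ)) (w : List σ),
    l.length + w.length ≤ n →
    ∃ sub : List (LTL σ), sub.Sublist l ∧ sub.length ≤ w.length + 1 ∧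
      (holdsF sub w → holdsF l w) := by
  intro n
  induction n with
  | zero =>
    intro l w hlen
    have : l = [] := by
      cases l with
      | nil => rfl
      | cons a l => simp at hlen
    subst this
    exact ⟨[], List.Sublist.refl _, by simp, fun h => h⟩
  | succ n ih =>
    intro l w hlen
    cases l with
    | nil => exact ⟨[], List.Sublist.refl _, by simp, fun h => h⟩
    | cons ψ rest =>
      classical
      by_cases hex : ∃ i, i < w.length ∧ ψ.sat (w.drop i)
      · set i₀ := Nat.find hex with hi₀def
        have hspec := Nat.find_spec hex
        rw [← hi₀def] at hspec
        rcases Nat.eq_zero_or_pos i₀ with h0 | hpos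
        · -- i₀ = 0
          obtain ⟨sub, hsub, hlen', himp⟩ := ih rest w (by simp at hlen ⊢; omega)
          refine ⟨sub, hsub.cons ψ, hlen', fun hh => ?_⟩
          refine ⟨0, ?_, ?_, ?_⟩
          · omega
          · rw [List.drop_zero]
            have := hspec.2; rw [h0] at this; rwa [List.drop_zero] at this
          · rw [List.drop_zero]; exact himp hh
        · -- i₀ > 0
          have hi0w : i₀ < w.length := hspec.1
          obtain ⟨sub', hsub', hlen', himp⟩ := ih rest (w.drop i₀) (by
            rw [List.length_drop]; simp at hlen; omega)
          refine ⟨ψ :: sub', hsub'.cons₂ ψ, ?_, fun hh => ?_⟩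
          · rw [List.length_drop] at hlen'; simp; omega
          · obtain ⟨i, hi, h1, h2⟩ := hh
            have hge : i₀ ≤ i := by
              by_contra hlt
              exact Nat.find_min hex (by omega) ⟨hi, h1⟩
            have h2' : holdsF sub' (w.drop i₀) := holdsF_mono_drop sub' w hge h2
            exact ⟨i₀, hi0w, hspec.2, himp h2'⟩
      · -- ψ never satisfied: sub = [ψ]
        refine ⟨[ψ], (List.nil_sublist rest).cons₂ ψ, by simp, fun hh => ?_⟩
        obtain ⟨i, hi, h1, _⟩ := hh
        exact absurd ⟨i, hi, h1⟩ hex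

/-- extraction of a short "fattern"-like formula. The subsequence
`ψ_{i₁}, …, ψ_{i_k}` (with `i₁ < ⋯ < i_k`) is expressed via `List.Sublist`. -/
theorem nestF_short {σ : Type} (ψs : List (LTL σ)) (v : List σ) (hv : v ≠ [])
    (h : ¬ (nestF ψs).sat v) :
    ∃ sub : List (LTL σ), sub.Sublist ψs ∧ sub.length ≤ v.length + 1 ∧
      ¬ (nestF sub).sat v ∧
      ∀ w : List σ, w ≠ [] → (nestF ψs).sat w → (nestF sub).sat w := by
  obtain ⟨sub, hsub, hlen, himp⟩ :=
    exists_short_aux (ψs.length + v.length) ψs v le_rfl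
  refine ⟨sub, hsub, hlen, ?_, ?_⟩
  · rw [nestF_iff] at h ⊢
    exact fun hs => h (himp hs)
  · intro w _ hw
    rw [nestF_iff] at hw ⊢
    exact holdsF_sublist hsub w hw
end

section
/- Every set of operators Op ⊆ {F, G, X, ∧} has the short formula property: there exists a polynomial P such that for every finite alphabet Σ and every sample (P,N) of nonempty finite words over Σ, if some LTL(Op) formula separates P from N, then some LTL(Op) formula of size at most P(‖P‖ + ‖N‖) separates P from N. -/
namespace SFP
open LTL

variable {σ : Type}

/-! ### basic word lemmas -/

def lastSuffix (u : List σ) : List σ := u.drop (u.length - 1)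

lemma lastSuffix_length {u : List σ} (hu : u ≠ []) : (lastSuffix u).length = 1 := by
  have : 0 < u.length := List.length_pos_iff.2 hu
  simp [lastSuffix]; omega

lemma lastSuffix_ne {u : List σ} (hu : u ≠ []) : lastSuffix u ≠ [] := by
  intro h
  have := lastSuffix_length hu
  rw [h] at this; simp at this

lemma lastSuffix_exists {u : List σ} (hu : u ≠ []) : ∃ y, lastSuffix u = [y] :=
  List.length_eq_one_iff.1 (lastSuffix_length hu)

lemma lastSuffix_drop {u : List σ} {i : ℕ} (hi : i < u.length) :
    lastSuffix (u.drop i) = lastSuffix u := by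
  simp only [lastSuffix, List.drop_drop, List.length_drop]
  congr 1; omega

/-! ### basic sat lemmas -/

lemma sat_singleton_ev {φ : LTL σ} {y : σ} : sat (ev φ) [y] ↔ sat φ [y] := by
  constructor
  · rintro ⟨i, hi, h⟩
    simp at hi; subst hi; simpa using h
  · intro h; exact ⟨0, by simp, h⟩

lemma sat_singleton_glob {φ : LTL σ} {y : σ} : sat (glob φ) [y] ↔ sat φ [y] := by
  constructor
  · intro h; simpa using h 0 (by simp)
  · intro h i hi; simp at hi; subst hi; simpa using h

lemma sat_singleton_ev' {φ : LTL σ} {w : List σ} (hw : w.length = 1) :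
    sat (ev φ) w ↔ sat φ w := by
  obtain ⟨y, rfl⟩ := List.length_eq_one_iff.1 hw; exact sat_singleton_ev

lemma sat_singleton_glob' {φ : LTL σ} {w : List σ} (hw : w.length = 1) :
    sat (glob φ) w ↔ sat φ w := by
  obtain ⟨y, rfl⟩ := List.length_eq_one_iff.1 hw; exact sat_singleton_glob

/-- eventually is monotone towards longer words (suffix). -/
lemma sat_ev_drop {φ : LTL σ} {u : List σ} {k : ℕ} (hk : k < u.length)
    (h : sat (ev φ) (u.drop k)) : sat (ev φ) u := by
  obtain ⟨i, hi, hs⟩ := h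
  rw [List.length_drop] at hi
  exact ⟨i + k, by omega, by rw [List.drop_drop] at hs; rwa [Nat.add_comm]⟩

lemma sat_ev_ev {φ : LTL σ} {u : List σ} (h : sat (ev (ev φ)) u) : sat (ev φ) u := by
  obtain ⟨i, hi, hs⟩ := h
  exact sat_ev_drop hi hs

lemma sat_glob_refl {φ : LTL σ} {u : List σ} (hu : u ≠ []) (h : sat (glob φ) u) : sat φ u := by
  have := h 0 (List.length_pos_iff.2 hu)
  simpa using this

lemma sat_glob_last {φ : LTL σ} {u : List σ} (hu : u ≠ []) (h : sat (glob φ) u) :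
    sat φ (lastSuffix u) := by
  have hl : 0 < u.length := List.length_pos_iff.2 hu
  exact h (u.length - 1) (by omega)

lemma sat_evglob {φ : LTL σ} {u : List σ} (hu : u ≠ []) :
    sat (ev (glob φ)) u ↔ sat (glob φ) (lastSuffix u) := by
  constructor
  · rintro ⟨i, hi, h⟩
    have hne : (u.drop i) ≠ [] := by
      intro he; rw [List.drop_eq_nil_iff] at he; omega
    have := sat_glob_last hne h
    rw [lastSuffix_drop hi] at this
    rw [sat_singleton_glob' (lastSuffix_length hu)]
    exact this
  · intro h
    have hl : 0 < u.length := List.length_pos_iff.2 hu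
    exact ⟨u.length - 1, by omega, h⟩

/-! ### excluded operators -/

lemma not_natom {Ops : Set Op} (hOps : Ops ⊆ {Op.F, Op.G, Op.X, Op.And}) {c : σ}
    (h : usesOnly (natom c) Ops) : False := by
  have := hOps h
  simp [Set.mem_insert_iff] at this

lemma not_disj {Ops : Set Op} (hOps : Ops ⊆ {Op.F, Op.G, Op.X, Op.And}) {α β : LTL σ}
    (h : usesOnly (disj α β) Ops) : False := by
  have := hOps h.1
  simp [Set.mem_insert_iff] at this

lemma not_untl {Ops : Set Op} (hOps : Ops ⊆ {Op.F, Op.G, Op.X, Op.And}) {α β : LTL σ}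
    (h : usesOnly (untl α β) Ops) : False := by
  have := hOps h.1
  simp [Set.mem_insert_iff] at this

/-! ### trichotomy on single-letter words -/

lemma trichotomy {Ops : Set Op} (hOps : Ops ⊆ {Op.F, Op.G, Op.X, Op.And}) :
    ∀ (φ : LTL σ), usesOnly φ Ops →
      (∀ y : σ, ¬ sat φ [y]) ∨ (∀ y : σ, sat φ [y]) ∨ (∃ a, ∀ y : σ, sat φ [y] ↔ y = a) := by
  intro φ
  induction φ with
  | top => intro _; right; left; intro y; trivial
  | bot => intro _; left; intro y h; exact h
  | atom c => intro _; right; right; exact ⟨c, fun y => by simp [sat, eq_comm]⟩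
  | natom c => intro h; exact absurd h (not_natom hOps)
  | disj α β ihα ihβ => intro h; exact absurd h (not_disj hOps)
  | untl α β ihα ihβ => intro h; exact absurd h (not_untl hOps)
  | next α ih => intro _; left; intro y h; simp [sat] at h
  | ev α ih =>
      intro h
      rcases ih h.2 with h1 | h1 | ⟨a, h1⟩
      · left; intro y hy; exact h1 y (sat_singleton_ev.1 hy)
      · right; left; intro y; exact sat_singleton_ev.2 (h1 y)
      · right; right; exact ⟨a, fun y => sat_singleton_ev.trans (h1 y)⟩
  | glob α ih =>
      intro h
      rcases ih h.2 with h1 | h1 | ⟨a, h1⟩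
      · left; intro y hy; exact h1 y (sat_singleton_glob.1 hy)
      · right; left; intro y; exact sat_singleton_glob.2 (h1 y)
      · right; right; exact ⟨a, fun y => sat_singleton_glob.trans (h1 y)⟩
  | conj α β ihα ihβ =>
      intro h
      rcases ihα h.2.1 with h1 | h1 | ⟨a, h1⟩
      · left; intro y hy; exact h1 y hy.1
      · rcases ihβ h.2.2 with h2 | h2 | ⟨b, h2⟩
        · left; intro y hy; exact h2 y hy.2
        · right; left; intro y; exact ⟨h1 y, h2 y⟩
        · right; right; exact ⟨b, fun y => ⟨fun hy => (h2 y).1 hy.2, fun hy => ⟨h1 y, (h2 y).2 hy⟩⟩⟩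
      · rcases ihβ h.2.2 with h2 | h2 | ⟨b, h2⟩
        · left; intro y hy; exact h2 y hy.2
        · right; right; exact ⟨a, fun y => ⟨fun hy => (h1 y).1 hy.1, fun hy => ⟨(h1 y).2 hy, h2 y⟩⟩⟩
        · by_cases hab : a = b
          · subst hab
            right; right
            exact ⟨a, fun y => ⟨fun hy => (h1 y).1 hy.1, fun hy => ⟨(h1 y).2 hy, (h2 y).2 hy⟩⟩⟩
          · left; intro y hy
            exact hab (((h1 y).1 hy.1).symm.trans ((h2 y).1 hy.2))

/-! ### iterated next -/

def XIter : ℕ → LTL σ → LTL σ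
  | 0, χ => χ
  | (k+1), χ => next (XIter k χ)

lemma XIter_size (k : ℕ) (χ : LTL σ) : size (XIter k χ) = k + size χ := by
  induction k with
  | zero => simp [XIter]
  | succ k ih => simp [XIter, size, ih]; omega

lemma XIter_usesOnly {Ops : Set Op} {k : ℕ} {χ : LTL σ} (hk : k ≠ 0 → Op.X ∈ Ops)
    (hχ : usesOnly χ Ops) : usesOnly (XIter k χ) Ops := by
  induction k with
  | zero => exact hχ
  | succ k ih =>
      refine ⟨hk (by omega), ih ?_⟩
      intro h; exact hk (by omega)

lemma XIter_sat {k : ℕ} {χ : LTL σ} {u : List σ} (hu : u ≠ []) :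
    sat (XIter k χ) u ↔ k < u.length ∧ sat χ (u.drop k) := by
  induction k generalizing u with
  | zero => simp [XIter, List.length_pos_iff.2 hu]
  | succ k ih =>
      show (2 ≤ u.length ∧ sat (XIter k χ) u.tail) ↔ _
      constructor
      · rintro ⟨h2, hs⟩
        have ht : u.tail ≠ [] := by
          intro he
          have := @List.length_tail _ u
          rw [he] at this; simp at this; omega
        rw [ih ht] at hs
        rw [List.length_tail] at hs
        refine ⟨by omega, ?_⟩
        rw [← List.drop_one, List.drop_drop] at hs
        rw [show k + 1 = 1 + k by omega]
        exact hs.2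
      · rintro ⟨hk, hs⟩
        have h2 : 2 ≤ u.length := by omega
        have ht : u.tail ≠ [] := by
          intro he
          have := @List.length_tail _ u
          rw [he] at this; simp at this; omega
        refine ⟨h2, (ih ht).2 ⟨by rw [List.length_tail]; omega, ?_⟩⟩
        rw [← List.drop_one, List.drop_drop]
        rwa [show k + 1 = 1 + k by omega] at hs

/-! ### lengths of lists of words -/

def wlen (V : List (List σ)) : ℕ := (V.map List.length).sum

lemma wlen_nil : wlen ([] : List (List σ)) = 0 := rfl

lemma length_le_wlen {V : List (List σ)} {v : List σ} (hv : v ∈ V) : v.length ≤ wlen V := by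
  induction V with
  | nil => simp at hv
  | cons w V ih =>
      rcases List.mem_cons.1 hv with h | hv
      · subst h; simp only [wlen, List.map_cons, List.sum_cons]; omega
      · have := ih hv
        simp [wlen] at this ⊢; omega

lemma one_le_wlen {V : List (List σ)} {v : List σ} (hv : v ∈ V) (hne : v ≠ []) :
    1 ≤ wlen V := le_trans (List.length_pos_iff.2 hne) (length_le_wlen hv)

lemma wlen_map_le {V : List (List σ)} (g : List σ → List σ)
    (hg : ∀ v ∈ V, (g v).length ≤ v.length) : wlen (V.map g) ≤ wlen V := by
  induction V with
  | nil => simp [wlen]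
  | cons w V ih =>
      have h1 := hg w (by simp)
      have h2 := ih (fun v hv => hg v (List.mem_cons_of_mem _ hv))
      simp [wlen] at h2 ⊢
      omega

lemma wlen_map_lt {V : List (List σ)} (g : List σ → List σ)
    (hg : ∀ v ∈ V, (g v).length ≤ v.length) {v₀ : List σ} (hv₀ : v₀ ∈ V)
    (hlt : (g v₀).length < v₀.length) : wlen (V.map g) < wlen V := by
  induction V with
  | nil => simp at hv₀
  | cons w V ih =>
      rcases List.mem_cons.1 hv₀ with h | hv₀
      · subst h
        have h2 := wlen_map_le g (fun v hv => hg v (List.mem_cons_of_mem _ hv))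
        simp [wlen] at h2 ⊢
        omega
      · have h1 := hg w (by simp)
        have h2 := ih (fun v hv => hg v (List.mem_cons_of_mem _ hv)) hv₀
        simp [wlen] at h2 ⊢
        omega

lemma wlen_filter_le (p : List σ → Bool) (V : List (List σ)) :
    wlen (V.filter p) ≤ wlen V := by
  induction V with
  | nil => simp [wlen]
  | cons w V ih =>
      by_cases h : p w
      · simp [wlen, List.filter_cons, h] at ih ⊢; omega
      · simp [wlen, List.filter_cons, h] at ih ⊢; omega

lemma wlen_tails_lt {V : List (List σ)} (hV : V ≠ []) (h2 : ∀ v ∈ V, 2 ≤ v.length) :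
    wlen (V.map List.tail) < wlen V := by
  obtain ⟨v₀, hv₀⟩ := List.exists_mem_of_ne_nil V hV
  refine wlen_map_lt List.tail (fun v hv => by rw [List.length_tail]; omega) hv₀ ?_
  have := h2 v₀ hv₀
  rw [List.length_tail]; omega


/-! ### the reduction lemma -/

lemma reduce {Ops : Set Op} (hOps : Ops ⊆ {Op.F, Op.G, Op.X, Op.And}) (hF : Op.F ∈ Ops) :
    ∀ (φ : LTL σ), usesOnly φ Ops → ∀ (w : List σ), w ≠ [] → ¬ sat φ w →
      (∀ u : List σ, u ≠ [] → ¬ sat φ u) ∨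
      (∃ θ : LTL σ, usesOnly θ Ops ∧ (∀ u, u ≠ [] → sat φ u → sat θ u) ∧ ¬ sat θ w ∧
        size θ ≤ w.length + 2) ∨
      (∃ (k : ℕ) (β : LTL σ), size β < size φ ∧ usesOnly β Ops ∧ (k ≠ 0 → Op.X ∈ Ops) ∧
        k < w.length ∧
        (∀ u, u ≠ [] → sat φ u → k < u.length ∧ sat (ev β) (u.drop k)) ∧
        (∀ j, k ≤ j → j < w.length → ¬ sat β (w.drop j))) := by
  intro φ
  induction φ with
  | top => intro _ w hw hn; exact absurd trivial hn
  | bot => intro _ w hw hn; left; intro u _ h; exact h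
  | atom c =>
      intro _ w hw hn
      right; left
      exact ⟨atom c, trivial, fun u _ h => h, hn, by simp only [size]; omega⟩
  | natom c => intro h; exact absurd h (not_natom hOps)
  | disj α β ihα ihβ => intro h; exact absurd h (not_disj hOps)
  | untl α β ihα ihβ => intro h; exact absurd h (not_untl hOps)
  | conj α β ihα ihβ =>
      intro h w hw hn
      have hcase : ¬ sat α w ∨ ¬ sat β w := by
        by_contra hc; push_neg at hc; exact hn ⟨hc.1, hc.2⟩
      have key : ∀ γ : LTL σ, usesOnly γ Ops → ¬ sat γ w → size γ < size (conj α β) →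
          (∀ u : List σ, u ≠ [] → sat (conj α β) u → sat γ u) →
          ((∀ u : List σ, u ≠ [] → ¬ sat γ u) ∨
            (∃ θ : LTL σ, usesOnly θ Ops ∧ (∀ u, u ≠ [] → sat γ u → sat θ u) ∧ ¬ sat θ w ∧
              size θ ≤ w.length + 2) ∨
            (∃ (k : ℕ) (β' : LTL σ), size β' < size γ ∧ usesOnly β' Ops ∧
              (k ≠ 0 → Op.X ∈ Ops) ∧ k < w.length ∧
              (∀ u, u ≠ [] → sat γ u → k < u.length ∧ sat (ev β') (u.drop k)) ∧
              (∀ j, k ≤ j → j < w.length → ¬ sat β' (w.drop j)))) →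
          ((∀ u : List σ, u ≠ [] → ¬ sat (conj α β) u) ∨
            (∃ θ : LTL σ, usesOnly θ Ops ∧ (∀ u, u ≠ [] → sat (conj α β) u → sat θ u) ∧
              ¬ sat θ w ∧ size θ ≤ w.length + 2) ∨
            (∃ (k : ℕ) (β' : LTL σ), size β' < size (conj α β) ∧ usesOnly β' Ops ∧
              (k ≠ 0 → Op.X ∈ Ops) ∧ k < w.length ∧
              (∀ u, u ≠ [] → sat (conj α β) u → k < u.length ∧ sat (ev β') (u.drop k)) ∧
              (∀ j, k ≤ j → j < w.length → ¬ sat β' (w.drop j)))) := by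
        intro γ hγu hnγ hsz hent ihγ
        rcases ihγ with h1 | ⟨θ, hθ1, hθ2, hθ3, hθ4⟩ | ⟨k, β', h1, h2, h3, h4, h5, h6⟩
        · left; intro u hu hs; exact h1 u hu (hent u hu hs)
        · right; left
          exact ⟨θ, hθ1, fun u hu hs => hθ2 u hu (hent u hu hs), hθ3, hθ4⟩
        · right; right
          exact ⟨k, β', lt_trans h1 hsz, h2, h3, h4,
            fun u hu hs => h5 u hu (hent u hu hs), h6⟩
      rcases hcase with hnα | hnβ
      · exact key α h.2.1 hnα (by simp only [size]; omega) (fun u _ hu => hu.1)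
          (ihα h.2.1 w hw hnα)
      · exact key β h.2.2 hnβ (by simp only [size]; omega) (fun u _ hu => hu.2)
          (ihβ h.2.2 w hw hnβ)
  | next α ih =>
      intro h w hw hn
      by_cases h2 : 2 ≤ w.length
      · have htne : w.tail ≠ [] := by
          intro he; have := @List.length_tail _ w; rw [he] at this; simp at this; omega
        have hnα : ¬ sat α w.tail := fun hs => hn ⟨h2, hs⟩
        rcases ih h.2 w.tail htne hnα with h1 | ⟨θ, hθ1, hθ2, hθ3, hθ4⟩ |
            ⟨k, β', h1', h2', h3', h4', h5', h6'⟩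
        · left
          rintro u hu ⟨hul, hs⟩
          have : u.tail ≠ [] := by
            intro he; have := @List.length_tail _ u; rw [he] at this; simp at this; omega
          exact h1 u.tail this hs
        · right; left
          refine ⟨next θ, ⟨h.1, hθ1⟩, ?_, ?_, ?_⟩
          · rintro u hu ⟨hul, hs⟩
            have htu : u.tail ≠ [] := by
              intro he; have := @List.length_tail _ u; rw [he] at this; simp at this; omega
            exact ⟨hul, hθ2 u.tail htu hs⟩
          · rintro ⟨_, hs⟩; exact hθ3 hs
          · have := @List.length_tail _ w
            simp only [size]; omega
        · right; right
          refine ⟨k + 1, β', ?_, h2', fun _ => h.1, ?_, ?_, ?_⟩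
          · simp only [size] at h1' ⊢; omega
          · rw [List.length_tail] at h4'; omega
          · rintro u hu ⟨hul, hs⟩
            have htu : u.tail ≠ [] := by
              intro he; have := @List.length_tail _ u; rw [he] at this; simp at this; omega
            obtain ⟨hk, hev⟩ := h5' u.tail htu hs
            rw [List.length_tail] at hk
            refine ⟨by omega, ?_⟩
            rw [← List.drop_one, List.drop_drop] at hev
            rwa [show k + 1 = 1 + k by omega]
          · intro j hj1 hj2
            have hh := h6' (j - 1) (by omega) (by rw [List.length_tail]; omega)
            rw [← List.drop_one, List.drop_drop] at hh
            rwa [show 1 + (j - 1) = j by omega] at hh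
      · right; left
        refine ⟨next top, ⟨h.1, trivial⟩, ?_, ?_, ?_⟩
        · rintro u hu ⟨hul, _⟩; exact ⟨hul, trivial⟩
        · rintro ⟨hl, _⟩; exact h2 hl
        · simp only [size]; omega
  | ev α ih =>
      intro h w hw hn
      right; right
      refine ⟨0, α, by simp only [size]; omega, h.2, fun hk => absurd rfl hk,
        List.length_pos_iff.2 hw, ?_, ?_⟩
      · intro u hu hs
        exact ⟨List.length_pos_iff.2 hu, by simpa using hs⟩
      · intro j _ hj2 hs
        exact hn ⟨j, hj2, hs⟩
  | glob α ih =>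
      intro h w hw hn
      by_cases h0 : sat α w
      · have hex : ∃ i, i < w.length ∧ ¬ sat α (w.drop i) := by
          by_contra hc; push_neg at hc; exact hn (fun i hi => hc i hi)
        obtain ⟨i, hi, hni⟩ := hex
        have hiz : i ≠ 0 := by
          rintro rfl; rw [List.drop_zero] at hni; exact hni h0
        have hdne : w.drop i ≠ [] := by
          intro he; rw [List.drop_eq_nil_iff] at he; omega
        rcases ih h.2 (w.drop i) hdne hni with h1 | ⟨θ, hθ1, hθ2, hθ3, hθ4⟩ |
            ⟨k, γ, h1', h2', h3', h4', h5', h6'⟩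
        · left
          intro u hu hs
          exact h1 u hu (sat_glob_refl hu hs)
        · right; left
          refine ⟨glob θ, ⟨h.1, hθ1⟩, ?_, ?_, ?_⟩
          · intro u hu hs j hj
            have : (u.drop j) ≠ [] := by
              intro he; rw [List.drop_eq_nil_iff] at he; omega
            exact hθ2 _ this (hs j hj)
          · intro hs
            exact hθ3 (hs i hi)
          · rw [List.length_drop] at hθ4
            simp only [size]; omega
        · by_cases hk0 : k = 0
          · subst hk0
            obtain ⟨y, hy⟩ := lastSuffix_exists hw
            have hlen : 0 < (w.drop i).length := List.length_pos_iff.2 hdne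
            have hnt : ¬ sat γ (lastSuffix w) := by
              have hh := h6' ((w.drop i).length - 1) (by omega) (by omega)
              rw [List.drop_drop] at hh
              unfold lastSuffix
              rwa [show w.length - 1 = i + ((List.drop i w).length - 1) by
                rw [List.length_drop]; omega]
            rcases trichotomy hOps γ h2' with ht | ht | ⟨a, ht⟩
            · left
              intro u hu hs
              have hα : sat α (lastSuffix u) := sat_glob_last hu hs
              obtain ⟨hpos, hev⟩ := h5' _ (lastSuffix_ne hu) hα
              rw [List.drop_zero] at hev
              obtain ⟨yu, hyu⟩ := lastSuffix_exists hu
              rw [hyu] at hev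
              exact ht yu (sat_singleton_ev.1 hev)
            · rw [hy] at hnt
              exact absurd (ht y) hnt
            · right; left
              refine ⟨ev (glob (atom a)), ⟨hF, h.1, trivial⟩, ?_, ?_, ?_⟩
              · intro u hu hs
                have hα : sat α (lastSuffix u) := sat_glob_last hu hs
                obtain ⟨hpos, hev⟩ := h5' _ (lastSuffix_ne hu) hα
                rw [List.drop_zero] at hev
                obtain ⟨yu, hyu⟩ := lastSuffix_exists hu
                rw [hyu] at hev
                have hya : yu = a := (ht yu).1 (sat_singleton_ev.1 hev)
                rw [sat_evglob hu, hyu, hya]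
                rw [sat_singleton_glob]
                simp [sat]
              · intro hs
                rw [sat_evglob hw, hy, sat_singleton_glob] at hs
                have hya : y = a := by simpa [sat] using hs
                rw [hy, hya] at hnt
                exact hnt ((ht a).2 rfl)
              · simp only [size]; omega
          · left
            intro u hu hs
            have hα : sat α (lastSuffix u) := sat_glob_last hu hs
            obtain ⟨hpos, _⟩ := h5' _ (lastSuffix_ne hu) hα
            rw [lastSuffix_length hu] at hpos
            omega
      · rcases ih h.2 w hw h0 with h1 | ⟨θ, hθ1, hθ2, hθ3, hθ4⟩ |
            ⟨k, γ, h1', h2', h3', h4', h5', h6'⟩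
        · left; intro u hu hs; exact h1 u hu (sat_glob_refl hu hs)
        · right; left
          exact ⟨θ, hθ1, fun u hu hs => hθ2 u hu (sat_glob_refl hu hs), hθ3, hθ4⟩
        · right; right
          exact ⟨k, γ, by simp only [size] at h1' ⊢; omega, h2', h3', h4',
            fun u hu hs => h5' u hu (sat_glob_refl hu hs), h6'⟩


/-! ### the kill lemma: weakening `ev φ` while staying false on all suffixes -/

lemma killLemma {Ops : Set Op} (hOps : Ops ⊆ {Op.F, Op.G, Op.X, Op.And}) (hF : Op.F ∈ Ops) :
    ∀ (n : ℕ) (φ : LTL σ) (V : List (List σ)), size φ + wlen V ≤ n → usesOnly φ Ops →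
      (∀ v ∈ V, v ≠ []) →
      (∀ v ∈ V, ∀ j < v.length, ¬ sat φ (v.drop j)) →
      ∃ ψ : LTL σ, usesOnly ψ Ops ∧ (∀ u : List σ, u ≠ [] → sat (ev φ) u → sat ψ u) ∧
        (∀ v ∈ V, ∀ j < v.length, ¬ sat ψ (v.drop j)) ∧ size ψ ≤ 6 * (wlen V)^2 + 1 := by
  intro n
  induction n using Nat.strong_induction_on with
  | _ n IH =>
  intro φ V hn hu hV hkill
  classical
  by_cases hVe : V = []
  · subst hVe
    exact ⟨top, trivial, fun _ _ _ => trivial, by simp, by simp [size, wlen]⟩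
  obtain ⟨v₀, hv₀⟩ := List.exists_mem_of_ne_nil V hVe
  have hs1 : 1 ≤ wlen V := one_le_wlen hv₀ (hV v₀ hv₀)
  cases φ with
  | top =>
      exfalso
      exact hkill v₀ hv₀ 0 (List.length_pos_iff.2 (hV v₀ hv₀)) trivial
  | bot =>
      refine ⟨bot, trivial, ?_, fun v _ j _ h => h, by simp only [size]; nlinarith⟩
      rintro u hu ⟨i, hi, hs⟩
      exact hs.elim
  | atom c =>
      refine ⟨ev (atom c), ⟨hF, trivial⟩, fun u _ h => h, ?_, by simp only [size]; nlinarith⟩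
      rintro v hv j hj ⟨i, hi, hs⟩
      rw [List.drop_drop] at hs
      rw [List.length_drop] at hi
      exact hkill v hv (j + i) (by omega) hs
  | natom c => exact absurd hu (not_natom hOps)
  | disj α β => exact absurd hu (not_disj hOps)
  | untl α β => exact absurd hu (not_untl hOps)
  | next α =>
      set V' : List (List σ) := (V.filter (fun v => 2 ≤ v.length)).map List.tail with hV'
      have hV'ne : ∀ w ∈ V', w ≠ [] := by
        intro w hw
        rw [hV', List.mem_map] at hw
        obtain ⟨v, hvf, rfl⟩ := hw
        rw [List.mem_filter] at hvf
        have h2 : 2 ≤ v.length := by simpa using hvf.2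
        intro he
        have := @List.length_tail _ v
        rw [he] at this; simp at this; omega
      have hVkill : ∀ w ∈ V', ∀ j < w.length, ¬ sat α (w.drop j) := by
        intro w hw j hj
        rw [hV', List.mem_map] at hw
        obtain ⟨v, hvf, rfl⟩ := hw
        rw [List.mem_filter] at hvf
        have h2 : 2 ≤ v.length := by simpa using hvf.2
        rw [List.length_tail] at hj
        intro hs
        rw [← List.drop_one, List.drop_drop] at hs
        refine hkill v hvf.1 j (by omega) ⟨?_, ?_⟩
        · rw [List.length_drop]; omega
        · rw [← List.drop_one, List.drop_drop]
          rwa [show 1 + j = j + 1 by omega] at hs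
      have hmeasure : size α + wlen V' < n := by
        have h1 : wlen V' ≤ wlen V := by
          calc wlen V' ≤ wlen (V.filter (fun v => 2 ≤ v.length)) :=
                wlen_map_le _ (fun v _ => by rw [List.length_tail]; omega)
            _ ≤ wlen V := wlen_filter_le _ _
        simp only [size] at hn; omega
      obtain ⟨ψ', hψu, hψe, hψf, hψs⟩ := IH _ hmeasure α V' le_rfl hu.2 hV'ne hVkill
      refine ⟨next ψ', ⟨hu.1, hψu⟩, ?_, ?_, ?_⟩
      · rintro u hu' ⟨i, hi, ⟨h2i, hsα⟩⟩
        have hul : 2 ≤ u.length := by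
          rw [List.length_drop] at h2i; omega
        have htu : u.tail ≠ [] := by
          intro he; have := @List.length_tail _ u; rw [he] at this; simp at this; omega
        refine ⟨hul, hψe u.tail htu ⟨i, ?_, ?_⟩⟩
        · rw [List.length_tail]; rw [List.length_drop] at h2i; omega
        · rw [← List.drop_one, List.drop_drop]
          rw [← List.drop_one, List.drop_drop] at hsα
          rwa [show i + 1 = 1 + i by omega] at hsα
      · rintro v hv j hj ⟨h2, hψ'⟩
        rw [List.length_drop] at h2
        have hvf : v.tail ∈ V' := by
          rw [hV', List.mem_map]
          exact ⟨v, List.mem_filter.2 ⟨hv, by simp; omega⟩, rfl⟩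
        refine hψf v.tail hvf j (by rw [List.length_tail]; omega) ?_
        rw [← List.drop_one, List.drop_drop] at hψ' ⊢
        rwa [show j + 1 = 1 + j by omega] at hψ'
      · simp only [size]
        rcases Nat.eq_zero_or_pos (wlen V') with h0 | hpos
        · rw [h0] at hψs; simp at hψs; nlinarith
        · have hlt : wlen V' < wlen V := by
            have hfne : V.filter (fun v => 2 ≤ v.length) ≠ [] := by
              intro hfe
              rw [hV', hfe] at hpos
              simp [wlen] at hpos
            calc wlen V' < wlen (V.filter (fun v => 2 ≤ v.length)) := by
                  refine wlen_tails_lt hfne ?_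
                  intro v hvf
                  rw [List.mem_filter] at hvf
                  simpa using hvf.2
              _ ≤ wlen V := wlen_filter_le _ _
          nlinarith
  | ev α =>
      have hkill' : ∀ v ∈ V, ∀ j < v.length, ¬ sat α (v.drop j) := by
        intro v hv j hj hs
        refine hkill v hv j hj ⟨0, ?_, ?_⟩
        · rw [List.length_drop]; omega
        · rwa [List.drop_zero]
      have hmeasure : size α + wlen V < n := by simp only [size] at hn; omega
      obtain ⟨ψ, hψu, hψe, hψf, hψs⟩ := IH _ hmeasure α V le_rfl hu.2 hV hkill'
      exact ⟨ψ, hψu, fun u hu' hs => hψe u hu' (sat_ev_ev hs), hψf, hψs⟩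
  | glob α =>
      have hlast : ∀ v ∈ V, ¬ sat α (lastSuffix v) := by
        intro v hv hs
        have hvne := hV v hv
        have hl : 0 < v.length := List.length_pos_iff.2 hvne
        refine hkill v hv (v.length - 1) (by omega) ?_
        show sat (glob α) (lastSuffix v)
        rw [sat_singleton_glob' (lastSuffix_length hvne)]
        exact hs
      rcases trichotomy hOps α hu.2 with ht | ht | ⟨a, ht⟩
      · refine ⟨bot, trivial, ?_, fun v _ j _ h => h, by simp only [size]; nlinarith⟩
        intro u hu' hs
        rw [sat_evglob hu'] at hs
        have := sat_glob_refl (lastSuffix_ne hu') hs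
        obtain ⟨yu, hyu⟩ := lastSuffix_exists hu'
        rw [hyu] at this
        exact ht yu this
      · exfalso
        obtain ⟨y, hy⟩ := lastSuffix_exists (hV v₀ hv₀)
        refine hlast v₀ hv₀ ?_
        rw [hy]; exact ht y
      · refine ⟨ev (glob (atom a)), ⟨hF, hu.1, trivial⟩, ?_, ?_, by simp only [size]; nlinarith⟩
        · intro u hu' hs
          rw [sat_evglob hu'] at hs ⊢
          have := sat_glob_refl (lastSuffix_ne hu') hs
          obtain ⟨yu, hyu⟩ := lastSuffix_exists hu'
          rw [hyu] at this ⊢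
          have hya : yu = a := (ht yu).1 this
          rw [hya]
          rw [sat_singleton_glob]
          simp [sat]
        · intro v hv j hj hs
          have hvne := hV v hv
          have hdne : v.drop j ≠ [] := by
            intro he; rw [List.drop_eq_nil_iff] at he; omega
          rw [sat_evglob hdne, lastSuffix_drop hj] at hs
          obtain ⟨y, hy⟩ := lastSuffix_exists hvne
          rw [hy, sat_singleton_glob] at hs
          have hya : y = a := by simpa [sat] using hs
          refine hlast v hv ?_
          rw [hy, hya]
          exact (ht a).2 rfl
  | conj α β =>
      obtain ⟨v₁, W, rfl⟩ : ∃ v₁ W, V = v₁ :: W := by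
        cases V with
        | nil => exact absurd rfl hVe
        | cons a b => exact ⟨a, b, rfl⟩
      have hv₁ : v₁ ∈ v₁ :: W := by simp
      have hv₁ne : v₁ ≠ [] := hV v₁ hv₁
      have hv₁len : 1 ≤ v₁.length := List.length_pos_iff.2 hv₁ne
      have hwcons : wlen (v₁ :: W) = v₁.length + wlen W := by
        simp [wlen]
      by_cases hW : W = []
      · -- singleton case
        subst hW
        have hnv : ¬ sat (conj α β) v₁ := by
          have h0 := hkill v₁ hv₁ 0 (by omega)
          rwa [List.drop_zero] at h0
        rcases reduce hOps hF (conj α β) hu v₁ hv₁ne hnv with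
          h1 | ⟨θ, tu, tent, tfals, tsz⟩ | ⟨k, β', hd1, hd2, hd3, hd4, hd5, hd6⟩
        · refine ⟨bot, trivial, ?_, fun v _ j _ h => h, by simp only [size]; nlinarith⟩
          rintro u hu' ⟨i, hi, hs⟩
          have hne : u.drop i ≠ [] := by
            intro he; rw [List.drop_eq_nil_iff] at he; omega
          exact h1 _ hne hs
        · -- theta case
          by_cases hv1 : v₁.length = 1
          · refine ⟨ev θ, ⟨hF, tu⟩, ?_, ?_, ?_⟩
            · rintro u hu' ⟨i, hi, hs⟩
              have hne : u.drop i ≠ [] := by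
                intro he; rw [List.drop_eq_nil_iff] at he; omega
              exact ⟨i, hi, tent _ hne hs⟩
            · intro v hv j hj hs
              rw [List.mem_singleton] at hv
              rw [hv] at hj hs
              rw [hv1] at hj
              interval_cases j
              rw [List.drop_zero] at hs
              rw [sat_singleton_ev' hv1] at hs
              exact tfals hs
            · have hwl : wlen [v₁] = v₁.length := by simp [wlen]
              simp only [size]
              rw [hwl, hv1]
              rw [hv1] at tsz
              omega
          · -- v₁ has length ≥ 2
            have hlen2 : 2 ≤ v₁.length := by omega
            have htne : v₁.tail ≠ [] := by
              intro he; have := @List.length_tail _ v₁; rw [he] at this; simp at this; omega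
            have hkt : ∀ v ∈ [v₁.tail], ∀ j < v.length, ¬ sat (conj α β) (v.drop j) := by
              intro v hv j hj
              rw [List.mem_singleton] at hv
              subst hv
              rw [List.length_tail] at hj
              intro hs
              rw [← List.drop_one, List.drop_drop] at hs
              exact hkill v₁ hv₁ (1 + j) (by omega) hs
            have hmeas : size (conj α β) + wlen [v₁.tail] < n := by
              have e1 : wlen [v₁.tail] = v₁.length - 1 := by
                simp [wlen, List.length_tail]
              have e2 : wlen [v₁] = v₁.length := by simp [wlen]
              rw [e2] at hn
              omega
            obtain ⟨ψ', pu, pe, pf, ps⟩ := IH _ hmeas (conj α β) [v₁.tail] le_rfl hu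
              (by intro v hv; rw [List.mem_singleton] at hv; subst hv; exact htne)
              hkt
            refine ⟨ev (conj θ ψ'), ⟨hF, hu.1, tu, pu⟩, ?_, ?_, ?_⟩
            · rintro u hu' ⟨i, hi, hs⟩
              have hne : u.drop i ≠ [] := by
                intro he; rw [List.drop_eq_nil_iff] at he; omega
              refine ⟨i, hi, tent _ hne hs, pe _ hne ⟨0, ?_, ?_⟩⟩
              · exact List.length_pos_iff.2 hne
              · rwa [List.drop_zero]
            · intro v hv j hj hs
              rw [List.mem_singleton] at hv
              rw [hv] at hj hs
              obtain ⟨i, hi, hθ, hψ'⟩ := hs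
              rw [List.drop_drop] at hθ hψ'
              rw [List.length_drop] at hi
              by_cases hl : j + i = 0
              · rw [hl, List.drop_zero] at hθ
                exact tfals hθ
              · refine pf v₁.tail (by simp) (j + i - 1) ?_ ?_
                · rw [List.length_tail]; omega
                · rw [← List.drop_one, List.drop_drop]
                  rwa [show 1 + (j + i - 1) = j + i by omega]
            · have e1 : wlen [v₁.tail] = v₁.length - 1 := by
                simp [wlen, List.length_tail]
              have e2 : wlen [v₁] = v₁.length := by simp [wlen]
              rw [e1] at ps
              rw [e2]
              simp only [size]
              obtain ⟨m', hm'⟩ : ∃ m', v₁.length = m' + 1 := ⟨v₁.length - 1, by omega⟩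
              rw [hm'] at ps tsz ⊢
              simp only [Nat.add_sub_cancel] at ps
              nlinarith [ps, tsz]
        · -- descend case
          have hne : v₁.drop k ≠ [] := by
            intro he; rw [List.drop_eq_nil_iff] at he; omega
          have hkt : ∀ v ∈ [v₁.drop k], ∀ j < v.length, ¬ sat β' (v.drop j) := by
            intro v hv j hj
            rw [List.mem_singleton] at hv
            subst hv
            rw [List.length_drop] at hj
            rw [List.drop_drop]
            exact hd6 (k + j) (by omega) (by omega)
          have hmeas : size β' + wlen [v₁.drop k] < n := by
            have e1 : wlen [v₁.drop k] ≤ v₁.length := by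
              simp only [wlen, List.map_cons, List.map_nil, List.sum_cons, List.sum_nil,
                List.length_drop]
              omega
            have e2 : wlen [v₁] = v₁.length := by simp [wlen]
            rw [e2] at hn
            simp only [size] at hd1 hn
            omega
          obtain ⟨ψ'', qu, qe, qf, qs⟩ := IH _ hmeas β' [v₁.drop k] le_rfl hd2
            (by intro v hv; rw [List.mem_singleton] at hv; subst hv; exact hne)
            hkt
          refine ⟨XIter k ψ'', XIter_usesOnly hd3 qu, ?_, ?_, ?_⟩
          · rintro u hu' ⟨i, hi, hs⟩
            have hne' : u.drop i ≠ [] := by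
              intro he; rw [List.drop_eq_nil_iff] at he; omega
            obtain ⟨hki, hev⟩ := hd5 (u.drop i) hne' hs
            rw [List.length_drop] at hki
            rw [XIter_sat hu']
            have hklt : k < u.length := by omega
            refine ⟨hklt, qe (u.drop k) (by intro he; rw [List.drop_eq_nil_iff] at he; omega) ?_⟩
            rw [List.drop_drop] at hev
            have hev' : sat (ev β') ((u.drop k).drop i) := by
              rw [List.drop_drop]
              rwa [show k + i = i + k by omega]
            refine sat_ev_drop ?_ hev'
            rw [List.length_drop]; omega
          · intro v hv j hj hs
            rw [List.mem_singleton] at hv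
            rw [hv] at hj hs
            have hdne : v₁.drop j ≠ [] := by
              intro he; rw [List.drop_eq_nil_iff] at he; omega
            rw [XIter_sat hdne] at hs
            obtain ⟨hkl, hsq⟩ := hs
            rw [List.length_drop] at hkl
            rw [List.drop_drop] at hsq
            refine qf (v₁.drop k) (by simp) j ?_ ?_
            · rw [List.length_drop]; omega
            · rw [List.drop_drop]
              rwa [show k + j = j + k by omega]
          · rw [XIter_size]
            have e1 : wlen [v₁.drop k] = v₁.length - k := by
              simp [wlen, List.length_drop]
            have e2 : wlen [v₁] = v₁.length := by simp [wlen]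
            rw [e1] at qs
            rw [e2]
            obtain ⟨d, hd⟩ : ∃ d, v₁.length = k + d := ⟨v₁.length - k, by omega⟩
            rw [hd] at qs ⊢
            simp only [Nat.add_sub_cancel_left] at qs
            nlinarith [qs]
      · -- split
        have hs2 : 1 ≤ wlen W := by
          obtain ⟨w, hw⟩ := List.exists_mem_of_ne_nil _ hW
          exact one_le_wlen hw (hV w (by simp [hw]))
        have hm1 : size (conj α β) + wlen [v₁] < n := by
          simp only [wlen, List.map_cons, List.sum_cons, List.map_nil, List.sum_nil] at *
          omega
        have hm2 : size (conj α β) + wlen W < n := by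
          rw [hwcons] at hn; omega
        obtain ⟨ψ₁, h1u, h1e, h1f, h1s⟩ := IH _ hm1 (conj α β) [v₁] le_rfl hu
          (by intro v hv; simp at hv; rw [hv]; exact hv₁ne)
          (by intro v hv; simp at hv; rw [hv]; exact hkill v₁ hv₁)
        obtain ⟨ψ₂, h2u, h2e, h2f, h2s⟩ := IH _ hm2 (conj α β) W le_rfl hu
          (fun v hv => hV v (by simp [hv])) (fun v hv => hkill v (by simp [hv]))
        refine ⟨conj ψ₁ ψ₂, ⟨hu.1, h1u, h2u⟩, ?_, ?_, ?_⟩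
        · intro u hu' hs
          exact ⟨h1e u hu' hs, h2e u hu' hs⟩
        · intro v hv j hj hs
          rcases List.mem_cons.1 hv with hveq | hvW
          · subst hveq
            exact h1f v (by simp) j hj hs.1
          · exact h2f v hvW j hj hs.2
        · simp only [size]
          rw [hwcons]
          have hb1 : ψ₁.size ≤ 6 * v₁.length ^ 2 + 1 := by
            simpa [wlen] using h1s
          have hab : 1 ≤ v₁.length * wlen W := Nat.mul_le_mul hv₁len hs2
          nlinarith [hb1, h2s, hv₁len, hs2, hab]

/-! ### the witness lemma -/

lemma witnessLemma {Ops : Set Op} (hOps : Ops ⊆ {Op.F, Op.G, Op.X, Op.And}) :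
    ∀ (n : ℕ) (φ : LTL σ) (V : List (List σ)), size φ + wlen V ≤ n → usesOnly φ Ops →
      (∀ v ∈ V, v ≠ []) → (∀ v ∈ V, ¬ sat φ v) →
      ∃ ψ : LTL σ, usesOnly ψ Ops ∧ (∀ u : List σ, u ≠ [] → sat φ u → sat ψ u) ∧
        (∀ v ∈ V, ¬ sat ψ v) ∧ size ψ ≤ 6 * (wlen V)^2 + 1 := by
  intro n
  induction n using Nat.strong_induction_on with
  | _ n IH =>
  intro φ V hn hu hV hfals
  classical
  by_cases hVe : V = []
  · subst hVe
    exact ⟨top, trivial, fun _ _ _ => trivial, by simp, by simp [size, wlen]⟩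
  obtain ⟨v₀', hv₀'⟩ := List.exists_mem_of_ne_nil V hVe
  have hs1 : 1 ≤ wlen V := one_le_wlen hv₀' (hV v₀' hv₀')
  cases φ with
  | top => exact absurd trivial (hfals v₀' hv₀')
  | bot =>
      exact ⟨bot, trivial, fun u _ h => h.elim, fun v _ h => h, by simp only [size]; nlinarith⟩
  | atom c =>
      exact ⟨atom c, trivial, fun u _ h => h, hfals, by simp only [size]; nlinarith⟩
  | natom c => exact absurd hu (not_natom hOps)
  | disj α β => exact absurd hu (not_disj hOps)
  | untl α β => exact absurd hu (not_untl hOps)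
  | conj α β =>
      obtain ⟨v₁, W, rfl⟩ : ∃ v₁ W, V = v₁ :: W := by
        cases V with
        | nil => exact absurd rfl hVe
        | cons a b => exact ⟨a, b, rfl⟩
      have hv₁ : v₁ ∈ v₁ :: W := by simp
      have hv₁ne : v₁ ≠ [] := hV v₁ hv₁
      have hv₁len : 1 ≤ v₁.length := List.length_pos_iff.2 hv₁ne
      have hwcons : wlen (v₁ :: W) = v₁.length + wlen W := by simp [wlen]
      by_cases hW : W = []
      · -- singleton
        subst hW
        have hn1 : ¬ sat (conj α β) v₁ := hfals v₁ hv₁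
        have hcase : ¬ sat α v₁ ∨ ¬ sat β v₁ := by
          by_contra hc; push_neg at hc; exact hn1 ⟨hc.1, hc.2⟩
        rcases hcase with hnα | hnβ
        · have hm : size α + wlen [v₁] < n := by
            simp only [size] at hn; omega
          obtain ⟨ψ, pu, pe, pf, psz⟩ := IH _ hm α [v₁] le_rfl hu.2.1 hV
            (by intro v hv; rw [List.mem_singleton] at hv; rw [hv]; exact hnα)
          exact ⟨ψ, pu, fun u hu' hs => pe u hu' hs.1, pf, psz⟩
        · have hm : size β + wlen [v₁] < n := by
            simp only [size] at hn; omega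
          obtain ⟨ψ, pu, pe, pf, psz⟩ := IH _ hm β [v₁] le_rfl hu.2.2 hV
            (by intro v hv; rw [List.mem_singleton] at hv; rw [hv]; exact hnβ)
          exact ⟨ψ, pu, fun u hu' hs => pe u hu' hs.2, pf, psz⟩
      · -- split
        have hs2 : 1 ≤ wlen W := by
          obtain ⟨w, hw⟩ := List.exists_mem_of_ne_nil _ hW
          exact one_le_wlen hw (hV w (by simp [hw]))
        have hm1 : size (conj α β) + wlen [v₁] < n := by
          simp only [wlen, List.map_cons, List.sum_cons, List.map_nil, List.sum_nil] at *
          omega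
        have hm2 : size (conj α β) + wlen W < n := by
          rw [hwcons] at hn; omega
        obtain ⟨ψ₁, h1u, h1e, h1f, h1s⟩ := IH _ hm1 (conj α β) [v₁] le_rfl hu
          (by intro v hv; rw [List.mem_singleton] at hv; rw [hv]; exact hv₁ne)
          (by intro v hv; rw [List.mem_singleton] at hv; rw [hv]; exact hfals v₁ hv₁)
        obtain ⟨ψ₂, h2u, h2e, h2f, h2s⟩ := IH _ hm2 (conj α β) W le_rfl hu
          (fun v hv => hV v (by simp [hv])) (fun v hv => hfals v (by simp [hv]))
        refine ⟨conj ψ₁ ψ₂, ⟨hu.1, h1u, h2u⟩, ?_, ?_, ?_⟩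
        · intro u hu' hs
          exact ⟨h1e u hu' hs, h2e u hu' hs⟩
        · intro v hv hs
          rcases List.mem_cons.1 hv with hveq | hvW
          · exact h1f v (by simp [hveq]) hs.1
          · exact h2f v hvW hs.2
        · simp only [size]
          rw [hwcons]
          have hb1 : ψ₁.size ≤ 6 * v₁.length ^ 2 + 1 := by simpa [wlen] using h1s
          have hab : 1 ≤ v₁.length * wlen W := Nat.mul_le_mul hv₁len hs2
          nlinarith [hb1, h2s, hv₁len, hs2, hab]
  | next α =>
      set V' : List (List σ) := (V.filter (fun v => 2 ≤ v.length)).map List.tail with hV'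
      have hV'ne : ∀ w ∈ V', w ≠ [] := by
        intro w hw
        rw [hV', List.mem_map] at hw
        obtain ⟨v, hvf, rfl⟩ := hw
        rw [List.mem_filter] at hvf
        have h2 : 2 ≤ v.length := by simpa using hvf.2
        intro he
        have := @List.length_tail _ v
        rw [he] at this; simp at this; omega
      have hfals' : ∀ w ∈ V', ¬ sat α w := by
        intro w hw
        rw [hV', List.mem_map] at hw
        obtain ⟨v, hvf, rfl⟩ := hw
        rw [List.mem_filter] at hvf
        have h2 : 2 ≤ v.length := by simpa using hvf.2
        intro hs
        exact hfals v hvf.1 ⟨h2, hs⟩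
      have hmeasure : size α + wlen V' < n := by
        have h1 : wlen V' ≤ wlen V := by
          calc wlen V' ≤ wlen (V.filter (fun v => 2 ≤ v.length)) :=
                wlen_map_le _ (fun v _ => by rw [List.length_tail]; omega)
            _ ≤ wlen V := wlen_filter_le _ _
        simp only [size] at hn; omega
      obtain ⟨ψ', hψu, hψe, hψf, hψs⟩ := IH _ hmeasure α V' le_rfl hu.2 hV'ne hfals'
      refine ⟨next ψ', ⟨hu.1, hψu⟩, ?_, ?_, ?_⟩
      · rintro u hu' ⟨h2, hs⟩
        have htu : u.tail ≠ [] := by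
          intro he; have := @List.length_tail _ u; rw [he] at this; simp at this; omega
        exact ⟨h2, hψe u.tail htu hs⟩
      · rintro v hv ⟨h2, hs⟩
        have hvf : v.tail ∈ V' := by
          rw [hV', List.mem_map]
          exact ⟨v, List.mem_filter.2 ⟨hv, by simp; omega⟩, rfl⟩
        exact hψf v.tail hvf hs
      · simp only [size]
        rcases Nat.eq_zero_or_pos (wlen V') with h0 | hpos
        · rw [h0] at hψs; simp at hψs; nlinarith
        · have hlt : wlen V' < wlen V := by
            have hfne : V.filter (fun v => 2 ≤ v.length) ≠ [] := by
              intro hfe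
              rw [hV', hfe] at hpos
              simp [wlen] at hpos
            calc wlen V' < wlen (V.filter (fun v => 2 ≤ v.length)) := by
                  refine wlen_tails_lt hfne ?_
                  intro v hvf
                  rw [List.mem_filter] at hvf
                  simpa using hvf.2
              _ ≤ wlen V := wlen_filter_le _ _
          nlinarith
  | ev α =>
      have hkill : ∀ v ∈ V, ∀ j < v.length, ¬ sat α (v.drop j) := by
        intro v hv j hj hs
        exact hfals v hv ⟨j, hj, hs⟩
      obtain ⟨ψ, qu, qe, qf, qs⟩ := killLemma hOps hu.1 (size α + wlen V) α V le_rfl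
        hu.2 hV hkill
      refine ⟨ψ, qu, qe, ?_, qs⟩
      intro v hv hs
      have := qf v hv 0 (List.length_pos_iff.2 (hV v hv))
      rw [List.drop_zero] at this
      exact this hs
  | glob α =>
      by_cases hall : ∀ v ∈ V, ¬ sat α v
      · have hm : size α + wlen V < n := by simp only [size] at hn; omega
        obtain ⟨ψ, pu, pe, pf, psz⟩ := IH _ hm α V le_rfl hu.2 hV hall
        exact ⟨ψ, pu, fun u hu' hs => pe u hu' (sat_glob_refl hu' hs), pf, psz⟩
      · push_neg at hall
        obtain ⟨vs, hvs, hsat⟩ := hall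
        set f : List σ → ℕ := fun v =>
          if h : ∃ i, i < v.length ∧ ¬ sat α (v.drop i) ∧ (sat α v → 1 ≤ i) then h.choose
          else 0 with hf
        have hfp : ∀ v ∈ V, f v < v.length ∧ ¬ sat α (v.drop (f v)) ∧ (sat α v → 1 ≤ f v) := by
          intro v hv
          have hex : ∃ i, i < v.length ∧ ¬ sat α (v.drop i) ∧ (sat α v → 1 ≤ i) := by
            have hnl := hfals v hv
            have hex0 : ∃ i, i < v.length ∧ ¬ sat α (v.drop i) := by
              by_contra hc; push_neg at hc; exact hnl (fun i hi => hc i hi)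
            obtain ⟨i, hi, hni⟩ := hex0
            refine ⟨i, hi, hni, ?_⟩
            intro hsv
            rcases Nat.eq_zero_or_pos i with rfl | hp
            · rw [List.drop_zero] at hni; exact absurd hsv hni
            · omega
          rw [hf]
          simp only [dif_pos hex]
          exact hex.choose_spec
        set V' : List (List σ) := V.map (fun v => v.drop (f v)) with hV'
        have hV'ne : ∀ w ∈ V', w ≠ [] := by
          intro w hw
          rw [hV', List.mem_map] at hw
          obtain ⟨v, hv, rfl⟩ := hw
          intro he
          rw [List.drop_eq_nil_iff] at he
          have := (hfp v hv).1
          omega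
        have hfals' : ∀ w ∈ V', ¬ sat α w := by
          intro w hw
          rw [hV', List.mem_map] at hw
          obtain ⟨v, hv, rfl⟩ := hw
          exact (hfp v hv).2.1
        have hmeasure : size α + wlen V' < n := by
          have h1 : wlen V' ≤ wlen V :=
            wlen_map_le _ (fun v _ => by rw [List.length_drop]; omega)
          simp only [size] at hn; omega
        obtain ⟨ψ', pu, pe, pf, psz⟩ := IH _ hmeasure α V' le_rfl hu.2 hV'ne hfals'
        refine ⟨glob ψ', ⟨hu.1, pu⟩, ?_, ?_, ?_⟩
        · intro u hu' hs j hj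
          have hne : u.drop j ≠ [] := by
            intro he; rw [List.drop_eq_nil_iff] at he; omega
          exact pe _ hne (hs j hj)
        · intro v hv hs
          have h1 := (hfp v hv).1
          have := hs (f v) h1
          refine pf (v.drop (f v)) ?_ this
          rw [hV', List.mem_map]
          exact ⟨v, hv, rfl⟩
        · simp only [size]
          have hlt : wlen V' < wlen V := by
            refine wlen_map_lt _ (fun v _ => by rw [List.length_drop]; omega) hvs ?_
            have h1 := (hfp vs hvs).1
            have h2 := (hfp vs hvs).2.2 hsat
            rw [List.length_drop]
            omega
          nlinarith [psz, hlt, hs1]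

lemma wlen_toList (N : Finset (List σ)) : wlen N.toList = ∑ w ∈ N, w.length := by
  show (N.toList.map List.length).sum = _
  rw [Finset.sum, ← Multiset.coe_toList N.val, Multiset.map_coe, Multiset.sum_coe]
  rfl

end SFP

/-- every `Op ⊆ {F, G, X, ∧}` has the short formula property. -/
theorem short_formula_property_F_G_X_and (Ops : Set LTL.Op)
    (hOps : Ops ⊆ {LTL.Op.F, LTL.Op.G, LTL.Op.X, LTL.Op.And}) :
    ∃ p : Polynomial ℕ, ∀ (σ : Type) [Fintype σ] (P N : Finset (List σ)),
      (∀ w ∈ P, w ≠ []) → (∀ w ∈ N, w ≠ []) →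
      (∃ φ : LTL σ, φ.usesOnly Ops ∧ φ.Separates P N) →
      ∃ φ : LTL σ, φ.usesOnly Ops ∧
        φ.size ≤ p.eval ((∑ w ∈ P, w.length) + (∑ w ∈ N, w.length)) ∧
        φ.Separates P N := by
  refine ⟨Polynomial.C 6 * Polynomial.X ^ 2 + Polynomial.C 1, ?_⟩
  intro σ _inst P N hP hN hex
  obtain ⟨φ₀, hu, hsep⟩ := hex
  obtain ⟨ψ, pu, pe, pf, psz⟩ := SFP.witnessLemma hOps (φ₀.size + SFP.wlen N.toList) φ₀
    N.toList le_rfl hu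
    (fun v hv => hN v (Finset.mem_toList.1 hv))
    (fun v hv => hsep.2 v (Finset.mem_toList.1 hv))
  refine ⟨ψ, pu, ?_, ?_, ?_⟩
  · rw [SFP.wlen_toList] at psz
    have heval : (Polynomial.C 6 * Polynomial.X ^ 2 + Polynomial.C 1 : Polynomial ℕ).eval
        ((∑ w ∈ P, w.length) + ∑ w ∈ N, w.length)
        = 6 * ((∑ w ∈ P, w.length) + ∑ w ∈ N, w.length) ^ 2 + 1 := by
      simp
    rw [heval]
    have hle : (∑ w ∈ N, w.length) ≤ (∑ w ∈ P, w.length) + ∑ w ∈ N, w.length :=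
      Nat.le_add_left _ _
    have hpow := Nat.pow_le_pow_left hle 2
    omega
  · intro u huP
    exact pe u (hP u huP) (hsep.1 u huP)
  · intro v hvN
    exact pf v (Finset.mem_toList.2 hvN)
end

section
/- Every set of operators Op ⊆ {F, G, X, ∨} has the short formula property: there exists a polynomial P such that for every finite alphabet Σ and every sample (P,N) of nonempty finite words over Σ, if some LTL(Op) formula separates P from N, then some LTL(Op) formula of size at most P(‖P‖ + ‖N‖) separates P from N. -/
namespace LTL

variable {σ : Type}

/-- Iterated `next`. -/
def Xpow : ℕ → LTL σ → LTL σ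
  | 0, φ => φ
  | n+1, φ => .next (Xpow n φ)

@[simp] lemma Xpow_zero (φ : LTL σ) : Xpow 0 φ = φ := rfl

lemma size_Xpow (a : ℕ) (φ : LTL σ) : size (Xpow a φ) = a + size φ := by
  induction a with
  | zero => simp
  | succ n ih => simp [Xpow, size, ih]; omega

lemma usesOnly_Xpow {Ops : Set Op} {φ : LTL σ} (a : ℕ)
    (hX : a = 0 ∨ Op.X ∈ Ops) (h : usesOnly φ Ops) : usesOnly (Xpow a φ) Ops := by
  induction a with
  | zero => exact h
  | succ n ih =>
    rcases hX with h0 | hX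
    · omega
    · exact ⟨hX, ih (Or.inr hX)⟩

lemma drop_ne_nil {w : List σ} {i : ℕ} (h : i < w.length) : w.drop i ≠ [] := by
  intro hcon
  have := (List.length_drop : (w.drop i).length = w.length - i)
  rw [hcon] at this
  simp at this
  omega

lemma sat_Xpow {a : ℕ} {φ : LTL σ} {w : List σ} (hw : w ≠ []) :
    sat (Xpow a φ) w ↔ a < w.length ∧ sat φ (w.drop a) := by
  induction a generalizing w with
  | zero =>
    simp [Xpow]
    intro _
    have : 0 < w.length := List.length_pos_iff.mpr hw
    omega
  | succ n ih =>
    constructor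
    · rintro ⟨hlen, hs⟩
      have htne : w.tail ≠ [] := by
        intro hcon
        have := (List.length_tail : w.tail.length = w.length - 1)
        rw [hcon] at this
        simp at this
        omega
      obtain ⟨h1, h2⟩ := (ih htne).mp hs
      rw [List.length_tail] at h1
      constructor
      · omega
      · rw [← List.drop_one, List.drop_drop] at h2
        have : n + 1 = 1 + n := by omega
        rw [this]
        exact h2
    · rintro ⟨hlen, hs⟩
      refine ⟨by omega, ?_⟩
      have htne : w.tail ≠ [] := by
        intro hcon
        have := (List.length_tail : w.tail.length = w.length - 1)
        rw [hcon] at this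
        simp at this
        omega
      rw [ih htne]
      refine ⟨by rw [List.length_tail]; omega, ?_⟩
      rw [← List.drop_one, List.drop_drop]
      have : n + 1 = 1 + n := by omega
      rw [← this]
      exact hs

lemma sat_glob_drop {φ : LTL σ} {w : List σ} (h : sat (glob φ) w) (k : ℕ) :
    sat (glob φ) (w.drop k) := by
  intro i hi
  rw [List.drop_drop]
  apply h
  rw [List.length_drop] at hi
  omega

lemma sat_glob_self {φ : LTL σ} {w : List σ} (hw : w ≠ []) (h : sat (glob φ) w) :
    sat φ w := by
  have := h 0 (List.length_pos_iff.mpr hw)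
  simpa using this

lemma sat_ev_self {φ : LTL σ} {w : List σ} (hw : w ≠ []) (h : sat φ w) :
    sat (ev φ) w := ⟨0, List.length_pos_iff.mpr hw, by simpa using h⟩

/-- Finite disjunction. -/
def bigOr : List (LTL σ) → LTL σ
  | [] => .bot
  | d :: ds => .disj d (bigOr ds)

lemma sat_bigOr {l : List (LTL σ)} {w : List σ} :
    sat (bigOr l) w ↔ ∃ d ∈ l, sat d w := by
  induction l with
  | nil => simp [bigOr, sat]
  | cons d ds ih => simp [bigOr, sat, ih]

lemma usesOnly_bigOr {Ops : Set Op} {l : List (LTL σ)} (hOr : Op.Or ∈ Ops)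
    (h : ∀ d ∈ l, usesOnly d Ops) : usesOnly (bigOr l) Ops := by
  induction l with
  | nil => trivial
  | cons d ds ih =>
    exact ⟨hOr, h d (by simp), ih (fun d hd => h d (by simp [hd]))⟩

lemma size_bigOr_le {l : List (LTL σ)} {B : ℕ} (h : ∀ d ∈ l, size d ≤ B) :
    size (bigOr l) ≤ l.length * (B + 1) + 1 := by
  induction l with
  | nil => simp [bigOr, size]
  | cons d ds ih =>
    have h1 := h d (by simp)
    have h2 := ih (fun x hx => h x (by simp [hx]))
    simp only [bigOr, size, List.length_cons]
    have : (ds.length + 1) * (B + 1) = ds.length * (B+1) + (B+1) := by ring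
    omega

end LTL

namespace LTL

variable {σ : Type}

lemma op_excl {Ops : Set Op} (hOps : Ops ⊆ {Op.F, Op.G, Op.X, Op.Or}) :
    Op.Not ∉ Ops ∧ Op.And ∉ Ops ∧ Op.U ∉ Ops := by
  refine ⟨fun h => ?_, fun h => ?_, fun h => ?_⟩ <;>
  · have := hOps h
    simp only [Set.mem_insert_iff, Set.mem_singleton_iff] at this
    rcases this with h | h | h | h <;> exact absurd h (by decide)

/-- The data produced by the certificate extraction at a single position. -/
def PickData (Ops : Set Op) (δ : LTL σ) (x : List σ) (c : ℕ) (χ β : LTL σ) (a : ℕ) : Prop :=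
  (c = 0 → sat χ x ∧ (∀ w, w ≠ [] → sat χ w → sat δ w) ∧ usesOnly χ Ops ∧
     size χ ≤ 2 * x.length) ∧
  (c = 1 → a < x.length ∧ usesOnly β Ops ∧ Op.G ∈ Ops ∧ Op.F ∈ Ops ∧ (a = 0 ∨ Op.X ∈ Ops) ∧
     sat (glob β) (x.drop (x.length - 1)) ∧
     (∀ γ : LTL σ, (∀ w, w ≠ [] → sat γ w → sat (glob β) w) →
        ∀ w, w ≠ [] → sat (Xpow a (ev γ)) w → sat δ w)) ∧
  (c = 2 → a < x.length ∧ usesOnly β Ops ∧ Op.G ∈ Ops ∧ (a = 0 ∨ Op.X ∈ Ops) ∧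
     sat (glob β) (x.drop a) ∧ size β < size δ ∧
     (∀ γ : LTL σ, (∀ w, w ≠ [] → sat γ w → sat (glob β) w) →
        ∀ w, w ≠ [] → sat (Xpow a γ) w → sat δ w))

lemma PickData.mk0 {Ops : Set Op} {δ : LTL σ} {x : List σ} {χ β : LTL σ} {a : ℕ}
    (h : sat χ x ∧ (∀ w, w ≠ [] → sat χ w → sat δ w) ∧ usesOnly χ Ops ∧
      size χ ≤ 2 * x.length) : PickData Ops δ x 0 χ β a :=
  ⟨fun _ => h, fun h1 => absurd h1 (by decide), fun h2 => absurd h2 (by decide)⟩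

lemma PickData.weaken {Ops : Set Op} {δ δ' : LTL σ} {x : List σ} {c : ℕ} {χ β : LTL σ} {a : ℕ}
    (hB : ∀ w : List σ, w ≠ [] → sat δ w → sat δ' w) (hs : size δ ≤ size δ')
    (h : PickData Ops δ x c χ β a) : PickData Ops δ' x c χ β a := by
  obtain ⟨h0, h1, h2⟩ := h
  refine ⟨?_, ?_, ?_⟩
  · intro hc
    obtain ⟨p1, p2, p3, p4⟩ := h0 hc
    exact ⟨p1, fun w hw hs' => hB w hw (p2 w hw hs'), p3, p4⟩
  · intro hc
    obtain ⟨p1, p2, p3, p4, p5, p6, p7⟩ := h1 hc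
    exact ⟨p1, p2, p3, p4, p5, p6, fun γ hγ w hw hs' => hB w hw (p7 γ hγ w hw hs')⟩
  · intro hc
    obtain ⟨p1, p2, p3, p4, p5, p6, p7⟩ := h2 hc
    exact ⟨p1, p2, p3, p4, p5, by omega,
      fun γ hγ w hw hs' => hB w hw (p7 γ hγ w hw hs')⟩

theorem pick {Ops : Set Op} (hOps : Ops ⊆ {Op.F, Op.G, Op.X, Op.Or}) :
    ∀ (δ : LTL σ) (x : List σ), x ≠ [] → sat δ x → usesOnly δ Ops →
    ∃ c χ β a, c ≤ 2 ∧ PickData Ops δ x c χ β a := by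
  intro δ
  induction δ with
  | top =>
    intro x hx hsat _
    exact ⟨0, top, top, 0, by omega, PickData.mk0
      ⟨trivial, fun w _ _ => trivial, trivial, by
        have : 0 < x.length := List.length_pos_iff.mpr hx
        simp [size]; omega⟩⟩
  | bot => intro x _ hsat _; exact absurd hsat id
  | atom c =>
    intro x hx hsat _
    exact ⟨0, atom c, top, 0, by omega, PickData.mk0
      ⟨hsat, fun w _ h => h, trivial, by
        have : 0 < x.length := List.length_pos_iff.mpr hx
        simp [size]; omega⟩⟩
  | natom c =>
    intro x hx hsat huse
    exact absurd huse (op_excl hOps).1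
  | conj δ₁ δ₂ ih1 ih2 =>
    intro x hx hsat huse
    exact absurd huse.1 (op_excl hOps).2.1
  | untl δ₁ δ₂ ih1 ih2 =>
    intro x hx hsat huse
    exact absurd huse.1 (op_excl hOps).2.2
  | disj δ₁ δ₂ ih1 ih2 =>
    intro x hx hsat huse
    rcases hsat with hsat | hsat
    · obtain ⟨c, χ, β, a, hc, hp⟩ := ih1 x hx hsat huse.2.1
      exact ⟨c, χ, β, a, hc, hp.weaken (fun w _ h => Or.inl h) (by simp [size]; omega)⟩
    · obtain ⟨c, χ, β, a, hc, hp⟩ := ih2 x hx hsat huse.2.2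
      exact ⟨c, χ, β, a, hc, hp.weaken (fun w _ h => Or.inr h) (by simp [size]; omega)⟩
  | next δ' ih =>
    intro x hx hsat huse
    obtain ⟨hlen, hsat'⟩ := hsat
    have htne : x.tail ≠ [] := by
      intro hcon; have := (List.length_tail : x.tail.length = x.length - 1); rw [hcon] at this; simp at this; omega
    have htlen : x.tail.length = x.length - 1 := (List.length_tail : x.tail.length = x.length - 1)
    have hdt : ∀ k, x.tail.drop k = x.drop (1 + k) := by
      intro k; rw [← List.drop_one, List.drop_drop]
    obtain ⟨c, χ, β, a, hc, hp⟩ := ih x.tail htne hsat' huse.2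
    obtain ⟨h0, h1, h2⟩ := hp
    interval_cases c
    · obtain ⟨p1, p2, p3, p4⟩ := h0 rfl
      refine ⟨0, next χ, β, a, by omega, PickData.mk0 ⟨⟨hlen, p1⟩, ?_, ⟨huse.1, p3⟩, ?_⟩⟩
      · rintro w hw ⟨hw2, hsw⟩
        have hwt : w.tail ≠ [] := by
          intro hcon; have := (List.length_tail : w.tail.length = w.length - 1); rw [hcon] at this; simp at this; omega
        exact ⟨hw2, p2 w.tail hwt hsw⟩
      · simp only [size]; omega
    · obtain ⟨p1, p2, p3, p4, p5, p6, p7⟩ := h1 rfl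
      refine ⟨1, χ, β, a + 1, by omega, ?_, ?_, ?_⟩
      · intro hcon; exact absurd hcon (by decide)
      · intro _
        refine ⟨by omega, p2, p3, p4, Or.inr huse.1, ?_, ?_⟩
        · rw [hdt] at p6
          have : 1 + (x.tail.length - 1) = x.length - 1 := by omega
          rwa [this] at p6
        · intro γ hγ w hw hsw
          obtain ⟨hw2, hsw'⟩ := hsw
          have hwt : w.tail ≠ [] := by
            intro hcon; have := (List.length_tail : w.tail.length = w.length - 1); rw [hcon] at this; simp at this; omega
          exact ⟨hw2, p7 γ hγ w.tail hwt hsw'⟩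
      · intro hcon; exact absurd hcon (by decide)
    · obtain ⟨p1, p2, p3, p4, p5, p6, p7⟩ := h2 rfl
      refine ⟨2, χ, β, a + 1, by omega, ?_, fun hcon => absurd hcon (by decide), ?_⟩
      · intro hcon; exact absurd hcon (by decide)
      · intro _
        refine ⟨by omega, p2, p3, Or.inr huse.1, ?_, by simp [size]; omega, ?_⟩
        · rw [hdt] at p5
          have : 1 + a = a + 1 := by omega
          rwa [this] at p5
        · intro γ hγ w hw hsw
          obtain ⟨hw2, hsw'⟩ := hsw
          have hwt : w.tail ≠ [] := by
            intro hcon; have := (List.length_tail : w.tail.length = w.length - 1); rw [hcon] at this; simp at this; omega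
          exact ⟨hw2, p7 γ hγ w.tail hwt hsw'⟩
  | ev δ' ih =>
    intro x hx hsat huse
    obtain ⟨i, hi, hsat'⟩ := hsat
    rcases Nat.eq_zero_or_pos i with hi0 | hipos
    · subst hi0
      rw [List.drop_zero] at hsat'
      obtain ⟨c, χ, β, a, hc, hp⟩ := ih x hx hsat' huse.2
      exact ⟨c, χ, β, a, hc, hp.weaken (fun w hw h => sat_ev_self hw h)
        (by simp only [size]; omega)⟩
    · have hdne : x.drop i ≠ [] := drop_ne_nil hi
      have hdlen : (x.drop i).length = x.length - i := (List.length_drop : (x.drop i).length = x.length - i)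
      obtain ⟨c, χ, β, a, hc, hp⟩ := ih (x.drop i) hdne hsat' huse.2
      obtain ⟨h0, h1, h2⟩ := hp
      interval_cases c
      · obtain ⟨p1, p2, p3, p4⟩ := h0 rfl
        refine ⟨0, ev χ, β, a, by omega, PickData.mk0
          ⟨⟨i, hi, p1⟩, ?_, ⟨huse.1, p3⟩, ?_⟩⟩
        · rintro w hw ⟨j, hj, hsw⟩
          exact ⟨j, hj, p2 (w.drop j) (drop_ne_nil hj) hsw⟩
        · simp only [size]; omega
      · obtain ⟨p1, p2, p3, p4, p5, p6, p7⟩ := h1 rfl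
        refine ⟨1, χ, β, a, by omega, fun hcon => absurd hcon (by decide), ?_,
          fun hcon => absurd hcon (by decide)⟩
        intro _
        refine ⟨by omega, p2, p3, p4, p5, ?_, ?_⟩
        · rw [List.drop_drop] at p6
          have heq : i + ((x.drop i).length - 1) = x.length - 1 := by omega
          rwa [heq] at p6
        · intro γ hγ w hw hsw
          exact sat_ev_self hw (p7 γ hγ w hw hsw)
      · -- inner G0 becomes GF
        obtain ⟨p1, p2, p3, p4, p5, p6, p7⟩ := h2 rfl
        refine ⟨1, χ, β, a, by omega, fun hcon => absurd hcon (by decide), ?_,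
          fun hcon => absurd hcon (by decide)⟩
        intro _
        refine ⟨by omega, p2, p3, huse.1, p4, ?_, ?_⟩
        · rw [List.drop_drop] at p5
          have hglob := sat_glob_drop p5 (x.length - 1 - (i + a))
          rw [List.drop_drop] at hglob
          have heq : i + a + (x.length - 1 - (i + a)) = x.length - 1 := by omega
          rwa [heq] at hglob
        · intro γ hγ w hw hsw
          rw [sat_Xpow hw] at hsw
          obtain ⟨hlt, hsw'⟩ := hsw
          obtain ⟨k, hk, hsk⟩ := hsw'
          rw [List.length_drop] at hk
          rw [List.drop_drop] at hsk
          have hkw : k < w.length := by omega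
          have hdk : w.drop k ≠ [] := drop_ne_nil hkw
          have : sat δ' (w.drop k) := by
            apply p7 γ hγ (w.drop k) hdk
            rw [sat_Xpow hdk]
            refine ⟨by rw [List.length_drop]; omega, ?_⟩
            rw [List.drop_drop]
            have heq : k + a = a + k := by omega
            rw [heq]
            exact hsk
          exact ⟨k, hkw, this⟩
  | glob δ' ih =>
    intro x hx hsat huse
    refine ⟨2, top, δ', 0, by omega, fun hcon => absurd hcon (by decide),
      fun hcon => absurd hcon (by decide), ?_⟩
    intro _
    refine ⟨List.length_pos_iff.mpr hx, huse.2, huse.1, Or.inl rfl, ?_, by simp [size], ?_⟩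
    · rwa [List.drop_zero]
    · intro γ hγ w hw hsw
      exact hγ w hw hsw

end LTL

namespace LTL

variable {σ : Type}

theorem lastCert {Ops : Set Op} (hOps : Ops ⊆ {Op.F, Op.G, Op.X, Op.Or}) (hG : Op.G ∈ Ops) :
    ∀ (δ : LTL σ) (x : List σ), x.length = 1 → sat δ x → usesOnly δ Ops →
    ∃ γ : LTL σ, sat γ x ∧ (∀ w : List σ, w ≠ [] → sat γ w → sat (glob δ) w) ∧
      usesOnly γ Ops ∧ size γ ≤ 2 := by
  intro δ
  induction δ with
  | top =>
    intro x hx hsat _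
    refine ⟨glob top, fun i hi => trivial, fun w _ h => h, ⟨hG, trivial⟩, by simp [size]⟩
  | bot => intro x _ hsat _; exact absurd hsat id
  | atom c =>
    intro x hx hsat _
    refine ⟨glob (atom c), ?_, fun w _ h => h, ⟨hG, trivial⟩, by simp [size]⟩
    intro i hi
    rw [hx] at hi
    interval_cases i
    simpa using hsat
  | natom c => intro x hx hsat huse; exact absurd huse (op_excl hOps).1
  | conj δ₁ δ₂ _ _ => intro x hx hsat huse; exact absurd huse.1 (op_excl hOps).2.1
  | untl δ₁ δ₂ _ _ => intro x hx hsat huse; exact absurd huse.1 (op_excl hOps).2.2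
  | disj δ₁ δ₂ ih1 ih2 =>
    intro x hx hsat huse
    rcases hsat with hsat | hsat
    · obtain ⟨γ, g1, g2, g3, g4⟩ := ih1 x hx hsat huse.2.1
      exact ⟨γ, g1, fun w hw h => fun i hi => Or.inl (g2 w hw h i hi), g3, g4⟩
    · obtain ⟨γ, g1, g2, g3, g4⟩ := ih2 x hx hsat huse.2.2
      exact ⟨γ, g1, fun w hw h => fun i hi => Or.inr (g2 w hw h i hi), g3, g4⟩
  | next δ' ih =>
    intro x hx hsat _
    obtain ⟨hlen, _⟩ := hsat
    omega
  | ev δ' ih =>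
    intro x hx hsat huse
    obtain ⟨i, hi, hsat'⟩ := hsat
    rw [hx] at hi
    interval_cases i
    rw [List.drop_zero] at hsat'
    obtain ⟨γ, g1, g2, g3, g4⟩ := ih x hx hsat' huse.2
    refine ⟨γ, g1, ?_, g3, g4⟩
    intro w hw h i hi
    exact sat_ev_self (drop_ne_nil hi) (g2 w hw h i hi)
  | glob δ' ih =>
    intro x hx hsat huse
    have hsat' : sat δ' x := sat_glob_self (by intro h; rw [h] at hx; simp at hx) hsat
    obtain ⟨γ, g1, g2, g3, g4⟩ := ih x hx hsat' huse.2
    refine ⟨γ, g1, ?_, g3, g4⟩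
    intro w hw h i hi
    exact sat_glob_drop (g2 w hw h) i

end LTL

namespace LTL

variable {σ : Type}

/-- Assembly of a guarded disjunction covering a final region. -/
lemma assemble {Ops : Set Op} (hOr : Op.Or ∈ Ops) (hG : Op.G ∈ Ops) {δ : LTL σ}
    {u : List σ} {s : ℕ} (L : List (LTL σ)) (d₀ dtail : LTL σ)
    (hBL : ∀ d ∈ L, ∀ w : List σ, w ≠ [] → sat d w → sat δ w)
    (hB0 : ∀ w : List σ, w ≠ [] → sat d₀ w → sat δ w)
    (hBt : ∀ w : List σ, w ≠ [] → sat dtail w → sat δ w)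
    (hUL : ∀ d ∈ L, usesOnly d Ops) (hU0 : usesOnly d₀ Ops) (hUt : usesOnly dtail Ops)
    (hcov : ∀ j, s ≤ j → j < u.length →
      (∃ d ∈ L, sat d (u.drop j)) ∨ sat d₀ (u.drop j) ∨ sat dtail (u.drop j)) :
    ∃ τ : LTL σ, (∀ j, s ≤ j → j < u.length → sat τ (u.drop j)) ∧
      (∀ w : List σ, w ≠ [] → sat τ w → sat (glob δ) w) ∧
      usesOnly τ Ops ∧ size τ = size (bigOr L) + size d₀ + size dtail + 3 := by
  refine ⟨glob (disj (bigOr L) (disj d₀ dtail)), ?_, ?_, ?_, ?_⟩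
  · intro j hj1 hj2 i hi
    rw [List.drop_drop]
    rw [List.length_drop] at hi
    have hcv := hcov (j + i) (by omega) (by omega)
    rcases hcv with ⟨d, hd, hds⟩ | h | h
    · exact Or.inl (sat_bigOr.mpr ⟨d, hd, hds⟩)
    · exact Or.inr (Or.inl h)
    · exact Or.inr (Or.inr h)
  · intro w hw hτ i hi
    have hbody := hτ i hi
    have hne := drop_ne_nil (w := w) hi
    rcases hbody with hb | hb | hb
    · obtain ⟨d, hd, hds⟩ := sat_bigOr.mp hb
      exact hBL d hd _ hne hds
    · exact hB0 _ hne hb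
    · exact hBt _ hne hb
  · exact ⟨hG, hOr, usesOnly_bigOr hOr hUL, hOr, hU0, hUt⟩
  · simp only [size]; omega

set_option maxHeartbeats 2000000 in
theorem gCover {Ops : Set Op} (hOps : Ops ⊆ {Op.F, Op.G, Op.X, Op.Or})
    (hOr : Op.Or ∈ Ops) (hG : Op.G ∈ Ops) :
    ∀ (r m : ℕ) (δ : LTL σ) (u : List σ) (s : ℕ),
    size δ ≤ m → r ≤ u.length → u.length ≤ s + r → s < u.length →
    usesOnly δ Ops → (∀ j, s ≤ j → j < u.length → sat δ (u.drop j)) →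
    ∃ τ : LTL σ, (∀ j, s ≤ j → j < u.length → sat τ (u.drop j)) ∧
      (∀ w : List σ, w ≠ [] → sat τ w → sat (glob δ) w) ∧
      usesOnly τ Ops ∧ size τ ≤ 100 * u.length * r ^ 2 := by
  intro r
  induction r using Nat.strong_induction_on with
  | _ r IHr =>
  intro m
  induction m using Nat.strong_induction_on with
  | _ m IHm =>
  intro δ u s hm hru hsr hs huse hsat
  classical
  have hp1 : 1 ≤ u.length := by omega
  have hr1 : 1 ≤ r := by omega
  by_cases hsing : u.length ≤ s + 1
  -- single position region: last-position certificate
  · have hx1 : (u.drop s).length = 1 := by rw [List.length_drop]; omega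
    obtain ⟨γ, g1, g2, g3, g4⟩ := lastCert hOps hG δ (u.drop s) hx1 (hsat s le_rfl hs) huse
    refine ⟨γ, ?_, g2, g3, ?_⟩
    · intro j hj1 hj2
      have : j = s := by omega
      rwa [this]
    · have h1 : 1 ≤ r ^ 2 := Nat.one_le_pow 2 r (by omega)
      nlinarith
  have hp2 : s + 2 ≤ u.length := by omega
  have hr2 : 2 ≤ r := by omega
  obtain ⟨k, rfl⟩ : ∃ k, r = k + 1 := ⟨r - 1, by omega⟩
  have hk1 : 1 ≤ k := by omega
  -- pick data for every position
  have Hpick : ∀ j : ℕ, ∃ c χ β a, (s ≤ j ∧ j < u.length) →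
      (c ≤ 2 ∧ PickData Ops δ (u.drop j) c χ β a) := by
    intro j
    by_cases hj : s ≤ j ∧ j < u.length
    · obtain ⟨c, χ, β, a, h1, h2⟩ :=
        pick hOps δ (u.drop j) (drop_ne_nil hj.2) (hsat j hj.1 hj.2) huse
      exact ⟨c, χ, β, a, fun _ => ⟨h1, h2⟩⟩
    · exact ⟨0, top, top, 0, fun h => absurd h hj⟩
  choose fc fχ fβ fa hf using Hpick
  -- the GF disjunct
  obtain ⟨dF, hBF, hUF, hsF, hsatF⟩ :
      ∃ dF : LTL σ, (∀ w : List σ, w ≠ [] → sat dF w → sat δ w) ∧ usesOnly dF Ops ∧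
        size dF ≤ u.length + 2 ∧
        (∀ j, s ≤ j → j < u.length → fc j = 1 → sat dF (u.drop j)) := by
    by_cases hGFex : ∃ a, ∃ j, ((s ≤ j ∧ j < u.length) ∧ fc j = 1) ∧ fa j = a
    · obtain ⟨aF, j₁, hj₁, hfa₁, haFmin⟩ :
          ∃ aF j₁, ((s ≤ j₁ ∧ j₁ < u.length) ∧ fc j₁ = 1) ∧ fa j₁ = aF ∧
            (∀ j, ((s ≤ j ∧ j < u.length) ∧ fc j = 1) → aF ≤ fa j) := by
        obtain ⟨j₁, hj₁, hfa₁⟩ := Nat.find_spec hGFex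
        exact ⟨Nat.find hGFex, j₁, hj₁, hfa₁,
          fun j hj => Nat.find_min' hGFex ⟨j, hj, rfl⟩⟩
      obtain ⟨w1, w2, w3, w4, w5, w6, w7⟩ := (hf j₁ hj₁.1).2.2.1 hj₁.2
      rw [hfa₁] at w1 w5 w7
      rw [List.length_drop] at w1
      rw [List.drop_drop, List.length_drop] at w6
      have hlast : j₁ + (u.length - j₁ - 1) = u.length - 1 := by omega
      rw [hlast] at w6
      have hlne : u.drop (u.length - 1) ≠ [] := drop_ne_nil (by omega)
      have hllen : (u.drop (u.length - 1)).length = 1 := by rw [List.length_drop]; omega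
      obtain ⟨γF, gf1, gf2, gf3, gf4⟩ :=
        lastCert hOps hG (fβ j₁) (u.drop (u.length - 1)) hllen (sat_glob_self hlne w6) w2
      refine ⟨Xpow aF (ev γF), ?_, ?_, ?_, ?_⟩
      · intro w hw hws
        exact w7 γF gf2 w hw hws
      · exact usesOnly_Xpow aF w5 ⟨w4, gf3⟩
      · rw [size_Xpow]
        simp only [size]
        omega
      · intro j hjs hjp hcj
        obtain ⟨v1, _, _, _, _, _, _⟩ := (hf j ⟨hjs, hjp⟩).2.2.1 hcj
        rw [List.length_drop] at v1
        have hale : aF ≤ fa j := haFmin j ⟨⟨hjs, hjp⟩, hcj⟩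
        have hdne : u.drop j ≠ [] := drop_ne_nil hjp
        rw [sat_Xpow hdne]
        refine ⟨by rw [List.length_drop]; omega, ?_⟩
        rw [List.drop_drop]
        refine ⟨u.length - 1 - (j + aF), ?_, ?_⟩
        · rw [List.length_drop]; omega
        · rw [List.drop_drop]
          have : j + aF + (u.length - 1 - (j + aF)) = u.length - 1 := by omega
          rw [this]
          exact gf1
    · refine ⟨bot, fun w _ h => absurd h id, trivial, by simp only [size]; omega, ?_⟩
      intro j hjs hjp hcj
      exact absurd ⟨fa j, j, ⟨⟨hjs, hjp⟩, hcj⟩, rfl⟩ hGFex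
  -- the G0 disjuncts
  by_cases hG0ex : ∃ j, (s ≤ j ∧ j < u.length) ∧ fc j = 2
  case pos =>
    obtain ⟨j₀, hj₀, hj₀min⟩ :
        ∃ j₀, ((s ≤ j₀ ∧ j₀ < u.length) ∧ fc j₀ = 2) ∧
          (∀ j, ((s ≤ j ∧ j < u.length) ∧ fc j = 2) → j₀ ≤ j) :=
      ⟨Nat.find hG0ex, Nat.find_spec hG0ex, fun j hj => Nat.find_min' hG0ex hj⟩
    obtain ⟨q1, q2, q3, q4, q5, q6, q7⟩ := (hf j₀ hj₀.1).2.2.2 hj₀.2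
    rw [List.length_drop] at q1
    rw [List.drop_drop] at q5
    by_cases hA : j₀ = s ∧ fa j₀ = 0
    · -- Case (A): the whole region is covered by one G0 pick at the start
      have hβsat : ∀ j, s ≤ j → j < u.length → sat (fβ j₀) (u.drop j) := by
        intro j hj1 hj2
        have := q5 (j - (j₀ + fa j₀)) (by rw [List.length_drop]; omega)
        rw [List.drop_drop] at this
        have heq : j₀ + fa j₀ + (j - (j₀ + fa j₀)) = j := by omega
        rwa [heq] at this
      obtain ⟨τ, t1, t2, t3, t4⟩ := IHm (size (fβ j₀)) (by omega) (fβ j₀) u s le_rfl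
        hru hsr hs q2 hβsat
      refine ⟨τ, t1, ?_, t3, t4⟩
      intro w hw hτ i hi
      have hgw := t2 w hw hτ
      have hgd := sat_glob_drop hgw i
      have := q7 (glob (fβ j₀)) (fun _ _ h => h) (w.drop i) (drop_ne_nil hi)
      rw [hA.2] at this
      exact this hgd
    · -- main case with a nonempty G0 class
      have hprog : s + 1 ≤ j₀ + fa j₀ := by
        rcases Nat.lt_or_ge s j₀ with h | h
        · omega
        · have : s ≤ j₀ := hj₀.1.1
          have : j₀ = s := by omega
          have : fa j₀ ≠ 0 := fun h0 => hA ⟨this, h0⟩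
          omega
      -- inner call
      have hin1 : j₀ + fa j₀ < u.length := by omega
      set rin := u.length - (j₀ + fa j₀) with hrin
      have hrinlt : rin < k + 1 := by omega
      obtain ⟨τin, tin1, tin2, tin3, tin4⟩ := IHr rin hrinlt (size (fβ j₀)) (fβ j₀) u
        (j₀ + fa j₀) le_rfl (by omega) (by omega) hin1 q2
        (by
          intro j hj1 hj2
          have := q5 (j - (j₀ + fa j₀)) (by rw [List.length_drop]; omega)
          rw [List.drop_drop] at this
          have heq : j₀ + fa j₀ + (j - (j₀ + fa j₀)) = j := by omega
          rwa [heq] at this)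
      -- tail call
      obtain ⟨dtail, hBt, hUt, hst, hsatt⟩ :
          ∃ dtail : LTL σ, (∀ w : List σ, w ≠ [] → sat dtail w → sat δ w) ∧
            usesOnly dtail Ops ∧ size dtail ≤ 100 * u.length * (fa j₀) ^ 2 + 1 ∧
            (∀ j, u.length - fa j₀ ≤ j → j < u.length → sat dtail (u.drop j)) := by
        by_cases ha0 : fa j₀ = 0
        · refine ⟨bot, fun w _ h => absurd h id, trivial, by simp only [size]; omega, ?_⟩
          intro j hj1 hj2
          omega
        · have hta : fa j₀ < k + 1 := by omega
          obtain ⟨τt, tt1, tt2, tt3, tt4⟩ := IHr (fa j₀) hta m δ u (u.length - fa j₀)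
            hm (by omega) (by omega) (by omega) huse
            (by intro j hj1 hj2; exact hsat j (by omega) hj2)
          exact ⟨τt, fun w hw hws => sat_glob_self hw (tt2 w hw hws), tt3,
            by omega, tt1⟩
      set d₀ := Xpow (fa j₀) τin with hd₀
      have hB0 : ∀ w : List σ, w ≠ [] → sat d₀ w → sat δ w := q7 τin tin2
      have hU0 : usesOnly d₀ Ops := usesOnly_Xpow _ q4 tin3
      have hs0 : size d₀ ≤ fa j₀ + 100 * u.length * rin ^ 2 := by
        rw [hd₀, size_Xpow]; omega
      -- the chain list
      set L := (List.range' s (u.length - s)).map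
        (fun j => if fc j = 0 then fχ j else dF) with hL
      have hmemL : ∀ d ∈ L, (∃ j, s ≤ j ∧ j < u.length ∧ fc j = 0 ∧ d = fχ j) ∨ d = dF := by
        intro d hd
        rw [hL, List.mem_map] at hd
        obtain ⟨j, hj, hdj⟩ := hd
        rw [List.mem_range'_1] at hj
        by_cases hcj : fc j = 0
        · exact Or.inl ⟨j, by omega, by omega, hcj, by rw [← hdj, if_pos hcj]⟩
        · exact Or.inr (by rw [← hdj, if_neg hcj])
      have hBL : ∀ d ∈ L, ∀ w : List σ, w ≠ [] → sat d w → sat δ w := by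
        intro d hd
        rcases hmemL d hd with ⟨j, hj1, hj2, hcj, rfl⟩ | rfl
        · exact ((hf j ⟨hj1, hj2⟩).2.1 hcj).2.1
        · exact hBF
      have hUL : ∀ d ∈ L, usesOnly d Ops := by
        intro d hd
        rcases hmemL d hd with ⟨j, hj1, hj2, hcj, rfl⟩ | rfl
        · exact ((hf j ⟨hj1, hj2⟩).2.1 hcj).2.2.1
        · exact hUF
      have hsL : ∀ d ∈ L, size d ≤ 2 * u.length + 2 := by
        intro d hd
        rcases hmemL d hd with ⟨j, hj1, hj2, hcj, rfl⟩ | rfl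
        · have := ((hf j ⟨hj1, hj2⟩).2.1 hcj).2.2.2
          rw [List.length_drop] at this
          omega
        · omega
      have hcov : ∀ j, s ≤ j → j < u.length →
          (∃ d ∈ L, sat d (u.drop j)) ∨ sat d₀ (u.drop j) ∨ sat dtail (u.drop j) := by
        intro j hj1 hj2
        have hc2 := (hf j ⟨hj1, hj2⟩).1
        have hmem : (if fc j = 0 then fχ j else dF) ∈ L := by
          rw [hL, List.mem_map]
          exact ⟨j, by rw [List.mem_range'_1]; omega, rfl⟩
        rcases Nat.lt_or_ge (fc j) 1 with hc | hc
        · have hc0 : fc j = 0 := by omega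
          refine Or.inl ⟨_, hmem, ?_⟩
          rw [if_pos hc0]
          exact ((hf j ⟨hj1, hj2⟩).2.1 hc0).1
        rcases Nat.lt_or_ge (fc j) 2 with hc' | hc'
        · have hc1 : fc j = 1 := by omega
          refine Or.inl ⟨_, hmem, ?_⟩
          rw [if_neg (by omega)]
          exact hsatF j hj1 hj2 hc1
        · have hc2' : fc j = 2 := by omega
          have hjge : j₀ ≤ j := hj₀min j ⟨⟨hj1, hj2⟩, hc2'⟩
          rcases Nat.lt_or_ge (j + fa j₀) u.length with hlt | hge
          · refine Or.inr (Or.inl ?_)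
            rw [hd₀, sat_Xpow (drop_ne_nil hj2)]
            refine ⟨by rw [List.length_drop]; omega, ?_⟩
            rw [List.drop_drop]
            exact tin1 (j + fa j₀) (by omega) hlt
          · exact Or.inr (Or.inr (hsatt j (by omega) hj2))
      obtain ⟨τ, t1, t2, t3, t4⟩ := assemble hOr hG L d₀ dtail hBL hB0 hBt hUL hU0 hUt hcov
      refine ⟨τ, t1, t2, t3, ?_⟩
      rw [t4]
      have hbig : size (bigOr L) ≤ (k + 1) * (2 * u.length + 3) + 1 := by
        have := size_bigOr_le hsL
        have hlen : L.length = u.length - s := by rw [hL]; simp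
        rw [hlen] at this
        have : size (bigOr L) ≤ (u.length - s) * (2 * u.length + 3) + 1 := this
        have hle : u.length - s ≤ k + 1 := by omega
        have := Nat.mul_le_mul_right (2 * u.length + 3) hle
        omega
      -- size of d₀ + dtail
      have hsq : rin ^ 2 + (fa j₀) ^ 2 ≤ k ^ 2 + 1 := by
        rcases Nat.eq_zero_or_pos (fa j₀) with h0 | hpos
        · have : rin ≤ k := by omega
          have := Nat.pow_le_pow_left this 2
          rw [h0]
          simp
          omega
        · obtain ⟨x, hx⟩ : ∃ x, fa j₀ = x + 1 := ⟨fa j₀ - 1, by omega⟩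
          obtain ⟨y, hy⟩ : ∃ y, rin = y + 1 := ⟨rin - 1, by omega⟩
          have hxyk : x + y + 1 ≤ k := by omega
          have h1 : rin ^ 2 + fa j₀ ^ 2 = x^2 + y^2 + 2*x + 2*y + 2 := by
            rw [hx, hy]; ring
          have h2 : (x + y + 1)^2 + 1 ≤ k ^ 2 + 1 := by
            have := Nat.pow_le_pow_left hxyk 2
            omega
          have h3 : x^2 + y^2 + 2*x + 2*y + 2 ≤ (x + y + 1)^2 + 1 := by nlinarith
          omega
      have hfap : fa j₀ ≤ u.length := by omega
      have hgoal : (k + 1) * (2 * u.length + 3) + 1 +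
          (fa j₀ + 100 * u.length * rin ^ 2) + (100 * u.length * (fa j₀) ^ 2 + 1) + 3 ≤
          100 * u.length * (k + 1) ^ 2 := by
        have hsum : 100 * u.length * rin ^ 2 + 100 * u.length * (fa j₀)^2 ≤
            100 * u.length * k ^ 2 + 100 * u.length := by
          have := Nat.mul_le_mul_left (100 * u.length) hsq
          nlinarith
        have hexp : 100 * u.length * (k+1)^2 =
            100 * u.length * k^2 + 200 * u.length * k + 100 * u.length := by ring
        have hk2 : 2 * u.length * (k+1) ≤ 100 * u.length * k := by nlinarith
        nlinarith
      omega
  case neg =>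
    -- no G0 positions at all
    obtain ⟨τ, t1, t2, t3, t4⟩ := assemble (δ := δ) (u := u) (s := s) hOr hG
      ((List.range' s (u.length - s)).map (fun j => if fc j = 0 then fχ j else dF))
      bot bot
      (by
        intro d hd
        rw [List.mem_map] at hd
        obtain ⟨j, hj, hdj⟩ := hd
        rw [List.mem_range'_1] at hj
        by_cases hcj : fc j = 0
        · rw [← hdj, if_pos hcj]
          exact ((hf j ⟨by omega, by omega⟩).2.1 hcj).2.1
        · rw [← hdj, if_neg hcj]
          exact hBF)
      (fun w _ h => absurd h id) (fun w _ h => absurd h id)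
      (by
        intro d hd
        rw [List.mem_map] at hd
        obtain ⟨j, hj, hdj⟩ := hd
        rw [List.mem_range'_1] at hj
        by_cases hcj : fc j = 0
        · rw [← hdj, if_pos hcj]
          exact ((hf j ⟨by omega, by omega⟩).2.1 hcj).2.2.1
        · rw [← hdj, if_neg hcj]
          exact hUF)
      trivial trivial
      (by
        intro j hj1 hj2
        have hc2 := (hf j ⟨hj1, hj2⟩).1
        have hmem : (if fc j = 0 then fχ j else dF) ∈
            (List.range' s (u.length - s)).map (fun j => if fc j = 0 then fχ j else dF) := by
          rw [List.mem_map]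
          exact ⟨j, by rw [List.mem_range'_1]; omega, rfl⟩
        rcases Nat.lt_or_ge (fc j) 1 with hc | hc
        · have hc0 : fc j = 0 := by omega
          refine Or.inl ⟨_, hmem, ?_⟩
          rw [if_pos hc0]
          exact ((hf j ⟨hj1, hj2⟩).2.1 hc0).1
        rcases Nat.lt_or_ge (fc j) 2 with hc' | hc'
        · have hc1 : fc j = 1 := by omega
          refine Or.inl ⟨_, hmem, ?_⟩
          rw [if_neg (by omega)]
          exact hsatF j hj1 hj2 hc1
        · exact absurd ⟨j, ⟨hj1, hj2⟩, by omega⟩ hG0ex)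
    refine ⟨τ, t1, t2, t3, ?_⟩
    rw [t4]
    have hsL : ∀ d ∈ (List.range' s (u.length - s)).map
        (fun j => if fc j = 0 then fχ j else dF), size d ≤ 2 * u.length + 2 := by
      intro d hd
      rw [List.mem_map] at hd
      obtain ⟨j, hj, hdj⟩ := hd
      rw [List.mem_range'_1] at hj
      by_cases hcj : fc j = 0
      · rw [← hdj, if_pos hcj]
        have := ((hf j ⟨by omega, by omega⟩).2.1 hcj).2.2.2
        rw [List.length_drop] at this
        omega
      · rw [← hdj, if_neg hcj]
        omega
    have hbig := size_bigOr_le hsL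
    rw [List.length_map, List.length_range'] at hbig
    have hle : u.length - s ≤ k + 1 := by omega
    have hmul := Nat.mul_le_mul_right (2 * u.length + 2 + 1) hle
    have hbot : size (bot : LTL σ) = 1 := rfl
    have : (k+1) * (2*u.length + 2 + 1) + 1 + 1 + 1 + 3 ≤ 100 * u.length * (k+1)^2 := by
      nlinarith
    omega

end LTL

namespace LTL

variable {σ : Type}

set_option maxHeartbeats 1000000 in
theorem cert {Ops : Set Op} (hOps : Ops ⊆ {Op.F, Op.G, Op.X, Op.Or}) (hOr : Op.Or ∈ Ops) :
    ∀ (φ : LTL σ) (x : List σ), x ≠ [] → sat φ x → usesOnly φ Ops →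
    ∃ ψ : LTL σ, sat ψ x ∧ (∀ w : List σ, w ≠ [] → sat ψ w → sat φ w) ∧
      usesOnly ψ Ops ∧ size ψ ≤ 100 * x.length ^ 3 + 2 * x.length := by
  intro φ
  induction φ with
  | top =>
    intro x hx _ _
    have h1 : 0 < x.length := List.length_pos_iff.mpr hx
    exact ⟨top, trivial, fun _ _ h => h, trivial, by
      simp only [size]; exact le_trans (by omega) (Nat.le_add_left _ _)⟩
  | bot => intro x _ hsat _; exact absurd hsat id
  | atom c =>
    intro x hx hsat _
    have h1 : 0 < x.length := List.length_pos_iff.mpr hx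
    exact ⟨atom c, hsat, fun _ _ h => h, trivial, by
      simp only [size]; exact le_trans (by omega) (Nat.le_add_left _ _)⟩
  | natom c => intro x hx hsat huse; exact absurd huse (op_excl hOps).1
  | conj δ₁ δ₂ _ _ => intro x hx hsat huse; exact absurd huse.1 (op_excl hOps).2.1
  | untl δ₁ δ₂ _ _ => intro x hx hsat huse; exact absurd huse.1 (op_excl hOps).2.2
  | disj δ₁ δ₂ ih1 ih2 =>
    intro x hx hsat huse
    rcases hsat with hsat | hsat
    · obtain ⟨ψ, h1, h2, h3, h4⟩ := ih1 x hx hsat huse.2.1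
      exact ⟨ψ, h1, fun w hw h => Or.inl (h2 w hw h), h3, h4⟩
    · obtain ⟨ψ, h1, h2, h3, h4⟩ := ih2 x hx hsat huse.2.2
      exact ⟨ψ, h1, fun w hw h => Or.inr (h2 w hw h), h3, h4⟩
  | next φ' ih =>
    intro x hx hsat huse
    obtain ⟨hlen, hsat'⟩ := hsat
    have htne : x.tail ≠ [] := by
      intro hcon; have := (List.length_tail : x.tail.length = x.length - 1); rw [hcon] at this; simp at this; omega
    obtain ⟨ψ, h1, h2, h3, h4⟩ := ih x.tail htne hsat' huse.2
    refine ⟨next ψ, ⟨hlen, h1⟩, ?_, ⟨huse.1, h3⟩, ?_⟩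
    · rintro w hw ⟨hw2, hsw⟩
      have hwt : w.tail ≠ [] := by
        intro hcon; have := (List.length_tail : w.tail.length = w.length - 1); rw [hcon] at this; simp at this; omega
      exact ⟨hw2, h2 w.tail hwt hsw⟩
    · rw [List.length_tail] at h4
      have hc : (x.length - 1) ^ 3 ≤ x.length ^ 3 := Nat.pow_le_pow_left (by omega) 3
      simp only [size]
      omega
  | ev φ' ih =>
    intro x hx hsat huse
    obtain ⟨i, hi, hsat'⟩ := hsat
    rcases Nat.eq_zero_or_pos i with hi0 | hipos
    · subst hi0
      rw [List.drop_zero] at hsat'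
      obtain ⟨ψ, h1, h2, h3, h4⟩ := ih x hx hsat' huse.2
      exact ⟨ψ, h1, fun w hw h => sat_ev_self hw (h2 w hw h), h3, h4⟩
    · have hdne : x.drop i ≠ [] := drop_ne_nil hi
      obtain ⟨ψ, h1, h2, h3, h4⟩ := ih (x.drop i) hdne hsat' huse.2
      refine ⟨ev ψ, ⟨i, hi, h1⟩, ?_, ⟨huse.1, h3⟩, ?_⟩
      · rintro w hw ⟨j, hj, hsw⟩
        exact ⟨j, hj, h2 (w.drop j) (drop_ne_nil hj) hsw⟩
      · rw [List.length_drop] at h4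
        have hc : (x.length - i) ^ 3 ≤ x.length ^ 3 := Nat.pow_le_pow_left (by omega) 3
        simp only [size]
        omega
  | glob φ' ih =>
    intro x hx hsat huse
    have hpos : 0 < x.length := List.length_pos_iff.mpr hx
    obtain ⟨τ, t1, t2, t3, t4⟩ := gCover hOps hOr huse.1 x.length (size φ') φ' x 0
      le_rfl le_rfl (by omega) hpos huse.2
      (fun j _ hj => hsat j hj)
    refine ⟨τ, ?_, t2, t3, ?_⟩
    · have := t1 0 le_rfl hpos
      rwa [List.drop_zero] at this
    · have : 100 * x.length * x.length ^ 2 = 100 * x.length ^ 3 := by ring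
      omega

theorem certAll {Ops : Set Op} (hOps : Ops ⊆ {Op.F, Op.G, Op.X, Op.Or}) (hOr : Op.Or ∈ Ops)
    (φ : LTL σ) (hφ : usesOnly φ Ops) (P : Finset (List σ))
    (hne : ∀ u ∈ P, u ≠ []) (hsat : ∀ u ∈ P, sat φ u) :
    ∃ ψ : LTL σ, usesOnly ψ Ops ∧ (∀ u ∈ P, sat ψ u) ∧
      (∀ w : List σ, w ≠ [] → sat ψ w → sat φ w) ∧
      size ψ ≤ (∑ u ∈ P, (100 * u.length ^ 3 + 2 * u.length + 1)) + 1 := by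
  classical
  revert hne hsat
  induction P using Finset.induction with
  | empty =>
    intro _ _
    exact ⟨bot, trivial, fun u hu => absurd hu (by simp), fun w _ h => absurd h id,
      by simp only [size]; simp⟩
  | @insert a s ha ih =>
    intro hne hsat
    obtain ⟨ψs, j1, j2, j3, j4⟩ := ih (fun u hu => hne u (Finset.mem_insert_of_mem hu))
      (fun u hu => hsat u (Finset.mem_insert_of_mem hu))
    have ha1 : a ≠ [] := hne a (Finset.mem_insert_self a s)
    obtain ⟨ψa, c1, c2, c3, c4⟩ := cert hOps hOr φ a ha1
      (hsat a (Finset.mem_insert_self a s)) hφ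
    refine ⟨disj ψa ψs, ⟨hOr, c3, j1⟩, ?_, ?_, ?_⟩
    · intro u hu
      rcases Finset.mem_insert.mp hu with rfl | hu
      · exact Or.inl c1
      · exact Or.inr (j2 u hu)
    · rintro w hw (h | h)
      exacts [c2 w hw h, j3 w hw h]
    · rw [Finset.sum_insert ha]
      simp only [size]
      linarith

end LTL

namespace LTL

variable {σ : Type}

/-- Modal wrapper: 0 = none, 1 = F, 2 = G, 3 = FG. -/
def mapp : ℕ → LTL σ → LTL σ
  | 0, b => b
  | 1, b => ev b
  | 2, b => glob b
  | _+3, b => ev (glob b)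

lemma size_mapp (m : ℕ) (b : LTL σ) : size (mapp m b) ≤ size b + 2 := by
  match m with
  | 0 => simp [mapp]
  | 1 => simp [mapp, size]
  | 2 => simp [mapp, size]
  | n+3 => simp [mapp, size]

lemma usesOnly_mapp {Ops : Set Op} {b : LTL σ} (m : ℕ)
    (hF : m = 1 ∨ m = 3 → Op.F ∈ Ops) (hG : m = 2 ∨ m = 3 → Op.G ∈ Ops)
    (hm : m ≤ 3) (hb : usesOnly b Ops) : usesOnly (mapp m b) Ops := by
  match m with
  | 0 => exact hb
  | 1 => exact ⟨hF (Or.inl rfl), hb⟩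
  | 2 => exact ⟨hG (Or.inl rfl), hb⟩
  | 3 => exact ⟨hF (Or.inr rfl), hG (Or.inr rfl), hb⟩

lemma sat_glob_len1 {φ : LTL σ} {y : List σ} (hy : y.length = 1) :
    sat (glob φ) y ↔ sat φ y := by
  constructor
  · intro h
    have := h 0 (by omega)
    rwa [List.drop_zero] at this
  · intro h i hi
    have : i = 0 := by omega
    rw [this, List.drop_zero]
    exact h

lemma sat_ev_glob {φ : LTL σ} {w : List σ} (hw : w ≠ []) :
    sat (ev (glob φ)) w ↔ sat φ (w.drop (w.length - 1)) := by
  have hpos : 0 < w.length := List.length_pos_iff.mpr hw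
  constructor
  · rintro ⟨i, hi, hg⟩
    have := hg (w.length - 1 - i) (by rw [List.length_drop]; omega)
    rw [List.drop_drop] at this
    have heq : i + (w.length - 1 - i) = w.length - 1 := by omega
    rwa [heq] at this
  · intro h
    refine ⟨w.length - 1, by omega, ?_⟩
    intro i hi
    rw [List.length_drop] at hi
    have : i = 0 := by omega
    rw [this, List.drop_zero]
    exact h

lemma sat_glob_ev {φ : LTL σ} {w : List σ} (hw : w ≠ []) :
    sat (glob (ev φ)) w ↔ sat φ (w.drop (w.length - 1)) := by
  have hpos : 0 < w.length := List.length_pos_iff.mpr hw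
  constructor
  · intro h
    obtain ⟨j, hj, hs⟩ := h (w.length - 1) (by omega)
    rw [List.length_drop] at hj
    have : j = 0 := by omega
    rw [this, List.drop_zero] at hs
    exact hs
  · intro h i hi
    refine ⟨w.length - 1 - i, by rw [List.length_drop]; omega, ?_⟩
    rw [List.drop_drop]
    have heq : i + (w.length - 1 - i) = w.length - 1 := by omega
    rwa [heq]

lemma sat_ev_ev {φ : LTL σ} {w : List σ} : sat (ev (ev φ)) w ↔ sat (ev φ) w := by
  constructor
  · rintro ⟨i, hi, j, hj, hs⟩
    rw [List.length_drop] at hj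
    rw [List.drop_drop] at hs
    exact ⟨i + j, by omega, hs⟩
  · rintro ⟨i, hi, hs⟩
    refine ⟨0, by omega, i, ?_, ?_⟩
    · rw [List.drop_zero]; exact hi
    · rw [List.drop_zero]; exact hs

lemma sat_glob_glob {φ : LTL σ} {w : List σ} :
    sat (glob (glob φ)) w ↔ sat (glob φ) w := by
  constructor
  · intro h i hi
    exact sat_glob_self (drop_ne_nil hi) (h i hi)
  · intro h i hi
    exact sat_glob_drop h i

lemma sat_ev_Xpow {a : ℕ} {φ : LTL σ} {w : List σ} (hw : w ≠ []) :
    sat (ev (Xpow a φ)) w ↔ sat (Xpow a (ev φ)) w := by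
  rw [sat_Xpow hw]
  constructor
  · rintro ⟨i, hi, hs⟩
    rw [sat_Xpow (drop_ne_nil hi)] at hs
    rw [List.length_drop] at hs
    obtain ⟨h1, h2⟩ := hs
    rw [List.drop_drop] at h2
    refine ⟨by omega, i, ?_, ?_⟩
    · rw [List.length_drop]; omega
    · rw [List.drop_drop]
      have heq : a + i = i + a := by omega
      rwa [heq]
  · rintro ⟨ha, i, hi, hs⟩
    rw [List.length_drop] at hi
    rw [List.drop_drop] at hs
    refine ⟨i, by omega, ?_⟩
    rw [sat_Xpow (drop_ne_nil (by omega : i < w.length))]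
    refine ⟨by rw [List.length_drop]; omega, ?_⟩
    rw [List.drop_drop]
    have heq : i + a = a + i := by omega
    rwa [heq]

lemma not_sat_glob_Xpow {a : ℕ} {φ : LTL σ} {w : List σ} (ha : 1 ≤ a) (hw : w ≠ []) :
    ¬ sat (glob (Xpow a φ)) w := by
  intro h
  have hpos : 0 < w.length := List.length_pos_iff.mpr hw
  have := h (w.length - 1) (by omega)
  rw [sat_Xpow (drop_ne_nil (by omega : w.length - 1 < w.length))] at this
  rw [List.length_drop] at this
  omega

set_option maxHeartbeats 1000000 in
theorem unaryNF {Ops : Set Op} (hOps : Ops ⊆ {Op.F, Op.G, Op.X, Op.Or})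
    (hOr : Op.Or ∉ Ops) (n : ℕ) (hn : 1 ≤ n) :
    ∀ φ : LTL σ, usesOnly φ Ops →
    ∃ (ψ : LTL σ) (a m : ℕ) (b : LTL σ),
      (ψ = bot ∨ (ψ = Xpow a (mapp m b) ∧ a < n ∧ m ≤ 3 ∧ size b ≤ 1 ∧ usesOnly b Ops ∧
        (a = 0 ∨ Op.X ∈ Ops) ∧ (m = 1 ∨ m = 3 → Op.F ∈ Ops) ∧
        (m = 2 ∨ m = 3 → Op.G ∈ Ops))) ∧
      (∀ w : List σ, w ≠ [] → w.length ≤ n → (sat ψ w ↔ sat φ w)) := by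
  intro φ
  induction φ with
  | top =>
    intro _
    exact ⟨top, 0, 0, top, Or.inr ⟨rfl, hn, by omega, le_rfl, trivial, Or.inl rfl,
      by omega, by omega⟩, fun w _ _ => Iff.rfl⟩
  | bot =>
    intro _
    exact ⟨bot, 0, 0, top, Or.inl rfl, fun w _ _ => Iff.rfl⟩
  | atom c =>
    intro _
    exact ⟨atom c, 0, 0, atom c, Or.inr ⟨rfl, hn, by omega, le_rfl, trivial, Or.inl rfl,
      by omega, by omega⟩, fun w _ _ => Iff.rfl⟩
  | natom c => intro huse; exact absurd huse (op_excl hOps).1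
  | conj δ₁ δ₂ _ _ => intro huse; exact absurd huse.1 (op_excl hOps).2.1
  | untl δ₁ δ₂ _ _ => intro huse; exact absurd huse.1 (op_excl hOps).2.2
  | disj δ₁ δ₂ _ _ => intro huse; exact absurd huse.1 hOr
  | next φ' ih =>
    intro huse
    obtain ⟨ψ', a, m, b, hshape, hequiv⟩ := ih huse.2
    have hcong : ∀ w : List σ, w ≠ [] → w.length ≤ n →
        (sat (next ψ') w ↔ sat (next φ') w) := by
      intro w hw hwn
      simp only [sat]
      constructor
      · rintro ⟨h2, hs⟩
        have hwt : w.tail ≠ [] := by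
          intro hcon; have := (List.length_tail : w.tail.length = w.length - 1); rw [hcon] at this; simp at this; omega
        have : w.tail.length ≤ n := by rw [List.length_tail]; omega
        exact ⟨h2, (hequiv w.tail hwt this).mp hs⟩
      · rintro ⟨h2, hs⟩
        have hwt : w.tail ≠ [] := by
          intro hcon; have := (List.length_tail : w.tail.length = w.length - 1); rw [hcon] at this; simp at this; omega
        have : w.tail.length ≤ n := by rw [List.length_tail]; omega
        exact ⟨h2, (hequiv w.tail hwt this).mpr hs⟩
    rcases hshape with rfl | ⟨rfl, ha, hm, hb, hub, hXf, hFf, hGf⟩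
    · refine ⟨bot, 0, 0, top, Or.inl rfl, ?_⟩
      intro w hw hwn
      rw [← hcong w hw hwn]
      simp only [sat]
      constructor
      · intro h; exact absurd h id
      · rintro ⟨_, h⟩; exact h
    · rcases Nat.lt_or_ge (a + 1) n with han | han
      · refine ⟨Xpow (a + 1) (mapp m b), a + 1, m, b,
          Or.inr ⟨rfl, han, hm, hb, hub, Or.inr huse.1, hFf, hGf⟩, ?_⟩
        intro w hw hwn
        rw [← hcong w hw hwn]
        rfl
      · refine ⟨bot, 0, 0, top, Or.inl rfl, ?_⟩
        intro w hw hwn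
        rw [← hcong w hw hwn]
        constructor
        · intro h; exact absurd h id
        · intro h
          have hs := (sat_Xpow (a := a + 1) (φ := mapp m b) hw).mp h
          omega
  | ev φ' ih =>
    intro huse
    obtain ⟨ψ', a, m, b, hshape, hequiv⟩ := ih huse.2
    have hcong : ∀ w : List σ, w ≠ [] → w.length ≤ n →
        (sat (ev ψ') w ↔ sat (ev φ') w) := by
      intro w hw hwn
      simp only [sat]
      constructor
      · rintro ⟨i, hi, hs⟩
        refine ⟨i, hi, (hequiv (w.drop i) (drop_ne_nil hi)
          (by rw [List.length_drop]; omega)).mp hs⟩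
      · rintro ⟨i, hi, hs⟩
        refine ⟨i, hi, (hequiv (w.drop i) (drop_ne_nil hi)
          (by rw [List.length_drop]; omega)).mpr hs⟩
    rcases hshape with rfl | ⟨rfl, ha, hm, hb, hub, hXf, hFf, hGf⟩
    · refine ⟨bot, 0, 0, top, Or.inl rfl, ?_⟩
      intro w hw hwn
      rw [← hcong w hw hwn]
      simp only [sat]
      constructor
      · intro h; exact absurd h id
      · rintro ⟨i, _, h⟩; exact h
    · -- new modality: 0 ↦ 1, 1 ↦ 1, 2 ↦ 3, 3 ↦ 3
      have main : ∀ m' : ℕ, m' ≤ 3 → (m' = 1 ∨ m' = 3 → Op.F ∈ Ops) →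
          (m' = 2 ∨ m' = 3 → Op.G ∈ Ops) →
          (∀ y : List σ, y ≠ [] → (sat (mapp m' b) y ↔ sat (ev (mapp m b)) y)) →
          ∃ (ψ : LTL σ) (a' m'' : ℕ) (b' : LTL σ),
            (ψ = bot ∨ (ψ = Xpow a' (mapp m'' b') ∧ a' < n ∧ m'' ≤ 3 ∧ size b' ≤ 1 ∧
              usesOnly b' Ops ∧ (a' = 0 ∨ Op.X ∈ Ops) ∧ (m'' = 1 ∨ m'' = 3 → Op.F ∈ Ops) ∧
              (m'' = 2 ∨ m'' = 3 → Op.G ∈ Ops))) ∧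
            (∀ w : List σ, w ≠ [] → w.length ≤ n → (sat ψ w ↔ sat (ev φ') w)) := by
        intro m' hm' hF' hG' hkey
        refine ⟨Xpow a (mapp m' b), a, m', b,
          Or.inr ⟨rfl, ha, hm', hb, hub, hXf, hF', hG'⟩, ?_⟩
        intro w hw hwn
        rw [← hcong w hw hwn, sat_ev_Xpow hw, sat_Xpow hw, sat_Xpow hw]
        constructor
        · rintro ⟨h1, h2⟩
          exact ⟨h1, (hkey _ (drop_ne_nil h1)).mp h2⟩
        · rintro ⟨h1, h2⟩
          exact ⟨h1, (hkey _ (drop_ne_nil h1)).mpr h2⟩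
      interval_cases m
      · exact main 1 (by omega) (fun _ => huse.1) (by omega)
          (fun y hy => Iff.rfl)
      · exact main 1 (by omega) (fun _ => huse.1) (by omega)
          (fun y hy => sat_ev_ev.symm)
      · exact main 3 (by omega) (fun _ => huse.1) (fun _ => hGf (Or.inl rfl))
          (fun y hy => Iff.rfl)
      · exact main 3 (by omega) (fun _ => huse.1) (fun _ => hGf (Or.inr rfl))
          (fun y hy => sat_ev_ev.symm)
  | glob φ' ih =>
    intro huse
    obtain ⟨ψ', a, m, b, hshape, hequiv⟩ := ih huse.2
    have hcong : ∀ w : List σ, w ≠ [] → w.length ≤ n →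
        (sat (glob ψ') w ↔ sat (glob φ') w) := by
      intro w hw hwn
      simp only [sat]
      constructor
      · intro h i hi
        exact (hequiv (w.drop i) (drop_ne_nil hi)
          (by rw [List.length_drop]; omega)).mp (h i hi)
      · intro h i hi
        exact (hequiv (w.drop i) (drop_ne_nil hi)
          (by rw [List.length_drop]; omega)).mpr (h i hi)
    rcases hshape with rfl | ⟨rfl, ha, hm, hb, hub, hXf, hFf, hGf⟩
    · refine ⟨bot, 0, 0, top, Or.inl rfl, ?_⟩
      intro w hw hwn
      rw [← hcong w hw hwn]
      constructor
      · intro h; exact absurd h id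
      · intro h
        have := h 0 (List.length_pos_iff.mpr hw)
        exact absurd this id
    · rcases Nat.eq_zero_or_pos a with rfl | hapos
      · -- a = 0 : combine the modalities
        rw [show Xpow 0 (mapp m b) = mapp m b from rfl] at hcong
        have main : ∀ m' : ℕ, m' ≤ 3 → (m' = 1 ∨ m' = 3 → Op.F ∈ Ops) →
            (m' = 2 ∨ m' = 3 → Op.G ∈ Ops) →
            (∀ y : List σ, y ≠ [] → (sat (mapp m' b) y ↔ sat (glob (mapp m b)) y)) →
            ∃ (ψ : LTL σ) (a' m'' : ℕ) (b' : LTL σ),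
              (ψ = bot ∨ (ψ = Xpow a' (mapp m'' b') ∧ a' < n ∧ m'' ≤ 3 ∧ size b' ≤ 1 ∧
                usesOnly b' Ops ∧ (a' = 0 ∨ Op.X ∈ Ops) ∧ (m'' = 1 ∨ m'' = 3 → Op.F ∈ Ops) ∧
                (m'' = 2 ∨ m'' = 3 → Op.G ∈ Ops))) ∧
              (∀ w : List σ, w ≠ [] → w.length ≤ n → (sat ψ w ↔ sat (glob φ') w)) := by
          intro m' hm' hF' hG' hkey
          refine ⟨mapp m' b, 0, m', b,
            Or.inr ⟨rfl, by omega, hm', hb, hub, Or.inl rfl, hF', hG'⟩, ?_⟩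
          intro w hw hwn
          rw [← hcong w hw hwn]
          exact hkey w hw
        have hlast1 : ∀ w : List σ, w ≠ [] → (w.drop (w.length - 1)).length = 1 := by
          intro w hw
          rw [List.length_drop]
          have : 0 < w.length := List.length_pos_iff.mpr hw
          omega
        interval_cases m
        · exact main 2 (by omega) (by omega) (fun _ => huse.1) (fun y hy => Iff.rfl)
        · refine main 3 (by omega) (fun _ => hFf (Or.inl rfl)) (fun _ => huse.1) ?_
          intro y hy
          show sat (ev (glob b)) y ↔ sat (glob (ev b)) y
          rw [sat_ev_glob hy, sat_glob_ev hy]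
        · exact main 2 (by omega) (by omega) (fun _ => huse.1)
            (fun y hy => sat_glob_glob.symm)
        · refine main 3 (by omega) (fun _ => hFf (Or.inr rfl)) (fun _ => huse.1) ?_
          intro y hy
          show sat (ev (glob b)) y ↔ sat (glob (ev (glob b))) y
          rw [sat_ev_glob hy, sat_glob_ev hy]
          exact (sat_glob_len1 (hlast1 y hy)).symm
      · -- a ≥ 1 : globally of a strict next is unsatisfiable
        refine ⟨bot, 0, 0, top, Or.inl rfl, ?_⟩
        intro w hw hwn
        rw [← hcong w hw hwn]
        constructor
        · intro h; exact absurd h id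
        · intro h
          exact absurd h (not_sat_glob_Xpow hapos hw)

end LTL

namespace LTL

variable {σ : Type}

lemma sum_cube_le {α : Type*} (s : Finset α) (f : α → ℕ) :
    ∑ x ∈ s, f x ^ 3 ≤ (∑ x ∈ s, f x) ^ 3 := by
  classical
  induction s using Finset.induction with
  | empty => simp
  | @insert a t ha ih =>
    rw [Finset.sum_insert ha, Finset.sum_insert ha]
    have : (f a + ∑ x ∈ t, f x) ^ 3 =
        f a ^ 3 + (∑ x ∈ t, f x) ^ 3 +
          (3 * (f a)^2 * (∑ x ∈ t, f x) + 3 * (f a) * (∑ x ∈ t, f x)^2) := by ring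
    omega

end LTL

/-- every `Op ⊆ {F, G, X, ∨}` has the short formula property. -/
theorem short_formula_property_F_G_X_or (Ops : Set LTL.Op)
    (hOps : Ops ⊆ {LTL.Op.F, LTL.Op.G, LTL.Op.X, LTL.Op.Or}) :
    ∃ p : Polynomial ℕ, ∀ (σ : Type) [Fintype σ] (P N : Finset (List σ)),
      (∀ w ∈ P, w ≠ []) → (∀ w ∈ N, w ≠ []) →
      (∃ φ : LTL σ, φ.usesOnly Ops ∧ φ.Separates P N) →
      ∃ φ : LTL σ, φ.usesOnly Ops ∧
        φ.size ≤ p.eval ((∑ w ∈ P, w.length) + (∑ w ∈ N, w.length)) ∧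
        φ.Separates P N := by
  classical
  refine ⟨Polynomial.C 100 * Polynomial.X ^ 3 + Polynomial.C 4 * Polynomial.X +
    Polynomial.C 4, ?_⟩
  rintro σ _ P N hPne hNne ⟨φ, hφuse, hφP, hφN⟩
  set n := (∑ w ∈ P, w.length) + (∑ w ∈ N, w.length) with hn
  have heval : (Polynomial.C 100 * Polynomial.X ^ 3 + Polynomial.C 4 * Polynomial.X +
      Polynomial.C 4).eval n = 100 * n ^ 3 + 4 * n + 4 := by
    simp [Polynomial.eval_add, Polynomial.eval_mul, Polynomial.eval_pow]
  rw [heval]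
  by_cases hP : P = ∅
  · refine ⟨LTL.bot, trivial, ?_, fun u hu => absurd hu (by simp [hP]),
      fun v _ hs => hs⟩
    exact le_trans (by norm_num [LTL.size]) (Nat.le_add_left 4 _)
  by_cases hN : N = ∅
  · refine ⟨LTL.top, trivial, ?_, fun u _ => trivial, fun v hv => absurd hv (by simp [hN])⟩
    exact le_trans (by norm_num [LTL.size]) (Nat.le_add_left 4 _)
  have hlenP : ∀ u ∈ P, u.length ≤ n := by
    intro u hu
    have h : u.length ≤ ∑ w ∈ P, w.length :=
      Finset.single_le_sum (fun i _ => Nat.zero_le _) hu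
    omega
  have hlenN : ∀ v ∈ N, v.length ≤ n := by
    intro v hv
    have h : v.length ≤ ∑ w ∈ N, w.length :=
      Finset.single_le_sum (fun i _ => Nat.zero_le _) hv
    omega
  have hn1 : 1 ≤ n := by
    obtain ⟨u, hu⟩ := Finset.nonempty_of_ne_empty hP
    have h1 : 1 ≤ u.length := List.length_pos_iff.mpr (hPne u hu)
    have := hlenP u hu
    omega
  by_cases hOr : LTL.Op.Or ∈ Ops
  · -- disjunction of certificates for the positive words
    obtain ⟨ψ, u1, u2, u3, u4⟩ := LTL.certAll hOps hOr φ hφuse P hPne hφP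
    refine ⟨ψ, u1, ?_, u2, fun v hv hs => hφN v hv (u3 v (hNne v hv) hs)⟩
    have hsplit : ∑ u ∈ P, (100 * u.length ^ 3 + 2 * u.length + 1) =
        100 * (∑ u ∈ P, u.length ^ 3) + 2 * (∑ u ∈ P, u.length) + P.card := by
      rw [Finset.sum_add_distrib, Finset.sum_add_distrib, ← Finset.mul_sum,
        ← Finset.mul_sum]
      simp
    have hcube : ∑ u ∈ P, u.length ^ 3 ≤ n ^ 3 := by
      refine le_trans (LTL.sum_cube_le P _) ?_
      exact Nat.pow_le_pow_left (by omega) 3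
    have hcard : P.card ≤ n := by
      have h1 : P.card ≤ ∑ u ∈ P, u.length := by
        rw [Finset.card_eq_sum_ones]
        exact Finset.sum_le_sum (fun u hu => List.length_pos_iff.mpr (hPne u hu))
      omega
    have hsumP : ∑ u ∈ P, u.length ≤ n := by omega
    have h100 : 100 * (∑ u ∈ P, u.length ^ 3) ≤ 100 * n ^ 3 :=
      Nat.mul_le_mul_left 100 hcube
    omega
  · -- no disjunction available: normal form of the separator itself
    obtain ⟨ψ, a, m, b, hshape, hequiv⟩ := LTL.unaryNF hOps hOr n hn1 φ hφuse
    have hsep : (∀ u ∈ P, LTL.sat ψ u) ∧ (∀ v ∈ N, ¬ LTL.sat ψ v) := by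
      constructor
      · intro u hu
        exact (hequiv u (hPne u hu) (hlenP u hu)).mpr (hφP u hu)
      · intro v hv hs
        exact hφN v hv ((hequiv v (hNne v hv) (hlenN v hv)).mp hs)
    rcases hshape with rfl | ⟨rfl, ha, hm, hb, hub, hXf, hFf, hGf⟩
    · exact ⟨LTL.bot, trivial,
        le_trans (by norm_num [LTL.size]) (Nat.le_add_left 4 _), hsep.1, hsep.2⟩
    · refine ⟨LTL.Xpow a (LTL.mapp m b),
        LTL.usesOnly_Xpow a hXf (LTL.usesOnly_mapp m hFf hGf hm hub),
        ?_, hsep.1, hsep.2⟩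
      rw [LTL.size_Xpow]
      have h1 := LTL.size_mapp m b
      have h2 : a + 3 + 1 ≤ 100 * n ^ 3 + 4 * n + 4 := by
        have h3 : 1 ≤ n ^ 3 := Nat.one_le_pow 3 n (by omega)
        omega
      omega
end

section
/- Every set of operators Op with {G, X, ∧, ∨} ⊆ Op ⊆ {F, G, X, ∧, ∨} has the short formula property: there exists a polynomial P such that for every finite alphabet Σ and every sample (P,N) of nonempty finite words over Σ, if some LTL(Op) formula separates P from N, then some LTL(Op) formula of size at most P(‖P‖ + ‖N‖) separates P from N. Moreover, an LTL(Op) separating formula exists unless some negative word lies in u·a^* for some positive word u with last letter a. -/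
namespace LTLAux

open LTL

variable {σ : Type}

lemma getLast?_drop {l : List σ} {i : ℕ} (h : i < l.length) :
    (l.drop i).getLast? = l.getLast? := by
  conv_rhs => rw [← List.take_append_drop i l]
  rw [List.getLast?_append_of_ne_nil]
  simp [List.drop_eq_nil_iff]; omega

lemma drop_ne_nil {l : List σ} {i : ℕ} (h : i < l.length) : l.drop i ≠ [] := by
  simp [List.drop_eq_nil_iff]; omega

/-- Monotonicity: formulas without `U` and `¬` are preserved under appending
copies of the last letter. -/
lemma sat_append_replicate {Ops : Set Op}
    (h2 : Ops ⊆ {Op.F, Op.G, Op.X, Op.And, Op.Or}) :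
    ∀ (φ : LTL σ), φ.usesOnly Ops → ∀ (a : σ) (m : ℕ) (w : List σ), w ≠ [] →
      w.getLast? = some a → φ.sat w → φ.sat (w ++ List.replicate m a) := by
  intro φ
  induction φ with
  | top => intros; trivial
  | bot => intro _ a m w _ _ hs; exact hs.elim
  | atom c =>
      intro _ a m w hw _ hs
      cases w with
      | nil => exact absurd rfl hw
      | cons b t => simpa [sat] using hs
  | natom c =>
      intro hu
      exact absurd (h2 hu) (by simp)
  | conj φ ψ ihφ ihψ =>
      intro hu a m w hw hl hs
      exact ⟨ihφ hu.2.1 a m w hw hl hs.1, ihψ hu.2.2 a m w hw hl hs.2⟩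
  | disj φ ψ ihφ ihψ =>
      intro hu a m w hw hl hs
      exact hs.elim (fun h => Or.inl (ihφ hu.2.1 a m w hw hl h))
        (fun h => Or.inr (ihψ hu.2.2 a m w hw hl h))
  | next φ ih =>
      intro hu a m w hw hl hs
      obtain ⟨hlen, hst⟩ := hs
      cases w with
      | nil => exact absurd rfl hw
      | cons b t =>
        have ht : t ≠ [] := by
          intro h; subst h; simp at hlen
        have hlt : t.getLast? = some a := by
          cases t with
          | nil => exact absurd rfl ht
          | cons c r => simpa [List.getLast?_cons_cons] using hl
        refine ⟨by simp; simp at hlen; omega, ?_⟩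
        simpa using ih hu.2 a m t ht hlt hst
  | ev φ ih =>
      intro hu a m w hw hl hs
      obtain ⟨i, hi, hst⟩ := hs
      refine ⟨i, by simp; omega, ?_⟩
      rw [List.drop_append_of_le_length (le_of_lt hi)]
      exact ih hu.2 a m _ (drop_ne_nil hi) (by rw [getLast?_drop hi]; exact hl) hst
  | glob φ ih =>
      intro hu a m w hw hl hs
      intro i hi
      simp only [List.length_append, List.length_replicate] at hi
      by_cases hiw : i < w.length
      · rw [List.drop_append_of_le_length (le_of_lt hiw)]
        exact ih hu.2 a m _ (drop_ne_nil hiw) (by rw [getLast?_drop hiw]; exact hl)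
          (hs i hiw)
      · push_neg at hiw
        have hdrop : (w ++ List.replicate m a).drop i
            = List.replicate (m - (i - w.length)) a := by
          have hieq : i = w.length + (i - w.length) := by omega
          rw [hieq, List.drop_length_add_append, List.drop_replicate]
          congr 1; omega
        rw [hdrop]
        -- sat φ [a]
        have hsa : φ.sat [a] := by
          obtain ⟨ys, rfl⟩ : ∃ ys, w = ys ++ [a] := by
            refine ⟨w.dropLast, ?_⟩
            rw [List.getLast?_eq_getLast hw, Option.some_inj] at hl
            rw [← hl]
            exact (List.dropLast_append_getLast hw).symm
          have := hs ys.length (by simp)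
          rwa [List.drop_left] at this
        obtain ⟨k', hk'⟩ : ∃ k', m - (i - w.length) = k' + 1 := ⟨m - (i - w.length) - 1, by omega⟩
        have hrepl : List.replicate (m - (i - w.length)) a
            = [a] ++ List.replicate k' a := by
          rw [hk', List.replicate_succ]; rfl
        rw [hrepl]
        exact ih hu.2 a k' [a] (by simp) (by simp) hsa
  | untl φ ψ _ _ =>
      intro hu
      exact absurd (h2 hu.1) (by simp)

/-- The characteristic formula of a nonempty word `u` with last letter `a`:
satisfied exactly by the words `u · a^m`. -/
def chi : List σ → LTL σ
  | [] => .top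
  | [a] => .conj (.atom a) (.glob (.atom a))
  | a :: b :: r => .conj (.atom a) (.next (chi (b :: r)))

lemma chi_usesOnly {Ops : Set Op} (hG : Op.G ∈ Ops) (hX : Op.X ∈ Ops)
    (hA : Op.And ∈ Ops) : ∀ u : List σ, (chi u).usesOnly Ops := by
  intro u
  induction u with
  | nil => trivial
  | cons a t ih =>
      cases t with
      | nil => exact ⟨hA, trivial, hG, trivial⟩
      | cons b r => exact ⟨hA, trivial, hX, ih⟩

lemma chi_size : ∀ u : List σ, (chi u).size ≤ 3 * u.length + 1 := by
  intro u
  induction u with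
  | nil => simp [chi, size]
  | cons a t ih =>
      cases t with
      | nil => simp [chi, size]
      | cons b r =>
          have : (chi (a :: b :: r)).size = (chi (b :: r)).size + 3 := by
            simp [chi, size]; omega
          rw [this]
          simp only [List.length_cons] at ih ⊢
          omega

lemma chi_sat_self : ∀ u : List σ, u ≠ [] → (chi u).sat u := by
  intro u
  induction u with
  | nil => intro h; exact absurd rfl h
  | cons a t ih =>
      intro _
      cases t with
      | nil =>
          refine ⟨rfl, ?_⟩
          intro i hi
          have h0 : i = 0 := by simp at hi; omega
          subst h0
          exact rfl
      | cons b r =>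
          exact ⟨rfl, by simp, ih (by simp)⟩

lemma chi_sound : ∀ u : List σ, u ≠ [] → ∀ v : List σ, (chi u).sat v →
    ∃ a m, u.getLast? = some a ∧ v = u ++ List.replicate m a := by
  intro u
  induction u with
  | nil => intro h; exact absurd rfl h
  | cons c t ih =>
      intro _ v hs
      cases t with
      | nil =>
          obtain ⟨hhead, hall⟩ := hs
          have hvne : v ≠ [] := by intro h; subst h; simp [sat] at hhead
          refine ⟨c, v.length - 1, rfl, ?_⟩
          have hv : v = List.replicate v.length c := by
            rw [List.eq_replicate_iff]
            refine ⟨rfl, ?_⟩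
            intro b hb
            obtain ⟨i, hi, rfl⟩ := List.mem_iff_getElem.mp hb
            have := hall i hi
            simp only [sat] at this
            rw [List.head?_drop] at this
            simp [List.getElem?_eq_getElem hi] at this
            exact this
          have hlen : 1 ≤ v.length := List.length_pos_iff.mpr hvne
          rw [hv]
          have : v.length = 1 + (v.length - 1) := by omega
          rw [this, List.replicate_add]
          simp
      | cons d r =>
          obtain ⟨hhead, hlen, hst⟩ := hs
          cases v with
          | nil => simp [sat] at hhead
          | cons e t' =>
              have he : e = c := by simpa [sat] using hhead
              subst he
              obtain ⟨a, m, hlast, heq⟩ := ih (by simp) t' (by simpa using hst)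
              exact ⟨a, m, by simpa [List.getLast?_cons_cons] using hlast,
                by simp [heq]⟩

def bigDisj (l : List (LTL σ)) : LTL σ := l.foldr .disj .bot

lemma sat_bigDisj (l : List (LTL σ)) (w : List σ) :
    (bigDisj l).sat w ↔ ∃ φ ∈ l, φ.sat w := by
  induction l with
  | nil => simp [bigDisj, sat]
  | cons φ t ih => simp [bigDisj, sat] at ih ⊢; rw [ih]

lemma usesOnly_bigDisj {Ops : Set Op} (hOr : Op.Or ∈ Ops) (l : List (LTL σ))
    (h : ∀ φ ∈ l, φ.usesOnly Ops) : (bigDisj l).usesOnly Ops := by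
  induction l with
  | nil => trivial
  | cons φ t ih =>
      exact ⟨hOr, h φ (by simp), ih (fun ψ hψ => h ψ (by simp [hψ]))⟩

lemma size_bigDisj (l : List (LTL σ)) :
    (bigDisj l).size = (l.map size).sum + l.length + 1 := by
  induction l with
  | nil => simp [bigDisj, size]
  | cons φ t ih => simp [bigDisj, size] at ih ⊢; omega

end LTLAux

open LTLAux in
/-- every `Op` with `{G, X, ∧, ∨} ⊆ Op ⊆ {F, G, X, ∧, ∨}` has the short
formula property; moreover a separating formula exists unless some negative word lies in
`u·a^*` for some positive word `u` with last letter `a`. -/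
theorem short_formula_property_G_X_and_or (Ops : Set LTL.Op)
    (h1 : {LTL.Op.G, LTL.Op.X, LTL.Op.And, LTL.Op.Or} ⊆ Ops)
    (h2 : Ops ⊆ {LTL.Op.F, LTL.Op.G, LTL.Op.X, LTL.Op.And, LTL.Op.Or}) :
    ∃ p : Polynomial ℕ, ∀ (σ : Type) [Fintype σ] (P N : Finset (List σ)),
      (∀ w ∈ P, w ≠ []) → (∀ w ∈ N, w ≠ []) →
      (((∃ φ : LTL σ, φ.usesOnly Ops ∧ φ.Separates P N) →
        ∃ φ : LTL σ, φ.usesOnly Ops ∧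
          φ.size ≤ p.eval ((∑ w ∈ P, w.length) + (∑ w ∈ N, w.length)) ∧
          φ.Separates P N) ∧
       ((∀ u ∈ P, ∀ v ∈ N, ∀ (a : σ) (m : ℕ),
          u.getLast? = some a → v ≠ u ++ List.replicate m a) →
        ∃ φ : LTL σ, φ.usesOnly Ops ∧ φ.Separates P N)) := by
  have hG : LTL.Op.G ∈ Ops := h1 (by simp)
  have hX : LTL.Op.X ∈ Ops := h1 (by simp)
  have hA : LTL.Op.And ∈ Ops := h1 (by simp)
  have hO : LTL.Op.Or ∈ Ops := h1 (by simp)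
  refine ⟨5 * Polynomial.X + 1, ?_⟩
  intro σ _ P N hP hN
  set Φ : LTL σ := bigDisj (P.toList.map chi) with hΦ
  -- properties of Φ under condition C
  have hΦuses : Φ.usesOnly Ops := by
    apply usesOnly_bigDisj hO
    intro ψ hψ
    obtain ⟨u, _, rfl⟩ := List.mem_map.mp hψ
    exact chi_usesOnly hG hX hA u
  have hΦsize : Φ.size ≤ 5 * ((∑ w ∈ P, w.length) + (∑ w ∈ N, w.length)) + 1 := by
    rw [hΦ, size_bigDisj, List.map_map, List.length_map, Finset.length_toList,
      Finset.sum_map_toList]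
    have hb : (∑ u ∈ P, (LTL.size ∘ chi) u) ≤ ∑ u ∈ P, (3 * u.length + 1) := by
      rw [← Finset.sum_map_toList, ← Finset.sum_map_toList]
      exact List.sum_le_sum (fun u _ => chi_size u)
    have hsum : (∑ u ∈ P, (3 * u.length + 1)) = 3 * (∑ u ∈ P, u.length) + P.card := by
      rw [Finset.sum_add_distrib, ← Finset.mul_sum]
      simp
    have hcard : P.card ≤ ∑ u ∈ P, u.length := by
      rw [Finset.card_eq_sum_ones]
      exact Finset.sum_le_sum (fun u hu => List.length_pos_iff.mpr (hP u hu))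
    have had : (∑ u ∈ P, (LTL.size ∘ chi) u) = P.sum (LTL.size ∘ chi) := rfl
    omega
  have hΦsep : (∀ u ∈ P, ∀ v ∈ N, ∀ (a : σ) (m : ℕ),
      u.getLast? = some a → v ≠ u ++ List.replicate m a) → Φ.Separates P N := by
    intro hC
    constructor
    · intro u hu
      rw [hΦ, sat_bigDisj]
      exact ⟨chi u, List.mem_map.mpr ⟨u, Finset.mem_toList.mpr hu, rfl⟩,
        chi_sat_self u (hP u hu)⟩
    · intro v hv hsat
      rw [hΦ, sat_bigDisj] at hsat
      obtain ⟨ψ, hψ, hsψ⟩ := hsat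
      obtain ⟨u, hu, rfl⟩ := List.mem_map.mp hψ
      have hu' := Finset.mem_toList.mp hu
      obtain ⟨a, m, hlast, heq⟩ := chi_sound u (hP u hu') v hsψ
      exact hC u hu' v hv a m hlast heq
  constructor
  · rintro ⟨ψ, hψuses, hψP, hψN⟩
    have hC : ∀ u ∈ P, ∀ v ∈ N, ∀ (a : σ) (m : ℕ),
        u.getLast? = some a → v ≠ u ++ List.replicate m a := by
      intro u hu v hv a m hlast heq
      have hsu : ψ.sat u := hψP u hu
      have : ψ.sat (u ++ List.replicate m a) :=
        sat_append_replicate h2 ψ hψuses a m u (hP u hu) hlast hsu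
      rw [← heq] at this
      exact hψN v hv this
    refine ⟨Φ, hΦuses, ?_, hΦsep hC⟩
    simpa using hΦsize
  · intro hC
    exact ⟨Φ, hΦuses, hΦsep hC⟩
end
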